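/- arXiv:0809.1640 — 5 statements merged into one kernel-verified Lean document; each statement's English description precedes it below -/
import Mathlib

section
/- For every real ε with 0 < ε < 1 and every real A > 0 there exist a constant C > 0 and a threshold x₀ such that for all x ≥ x₀: the number of positive integers n ≤ x whose z-smooth part exceeds x^ε is at most C · x · (log x)^{-A}, where z := exp(log x / (ε log log x)). -/
open scoped Classical

/-- The `z`-smooth part of a positive integer `n`: the product of `p ^ v_p(n)` over the
primes `p ≤ z` dividing `n`, i.e. the largest `z`-smooth divisor of `n`. -/
noncomputable def smoothPart (z : ℝ) (n : ℕ) : ℕ :=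
  ∏ p ∈ n.primeFactors.filter fun p : ℕ => (p : ℝ) ≤ z, p ^ n.factorization p

/-!
Rankin's trick: an `n ≤ x` whose `z`-smooth part exceeds `y` is a multiple of some `z`-smooth
`m > y`, so for every `0 ≤ σ < 1` the count is at most
`∑ x / m ≤ x y^(-σ) ∑_{m smooth} m^(σ-1) = x y^(-σ) ∏_{p ≤ z} (1 - p^(σ-1))⁻¹`.
Chebyshev's bound `θ(u) ≤ u log 4` on the dyadic blocks of primes gives
`∑_{p ≤ z} p^(σ-1) ≤ 4 (log log z + σ log z · z^σ + O(1))`. With `σ = t / log z` the Euler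
product is `O_t((log x)^16)`, while `(x^ε)^(-σ) = (log x)^(-ε² t)`; take `ε² t = A + 16`.
-/

open Real Finset Filter

theorem smoothPart_dvd (z : ℝ) (n : ℕ) : smoothPart z n ∣ n := by
  rcases eq_or_ne n 0 with rfl | hn
  · exact dvd_zero _
  conv_rhs => rw [Nat.prod_primeFactors_pow_factorization hn]
  exact prod_dvd_prod_of_subset _ _ _ (filter_subset _ _)

theorem smoothPart_mem_smoothNumbers (z : ℝ) (n : ℕ) :
    smoothPart z n ∈ (⌊z⌋₊ + 1).smoothNumbers := by
  refine prod_induction _ (· ∈ (⌊z⌋₊ + 1).smoothNumbers) (fun _ _ => Nat.mul_mem_smoothNumbers)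
    (Nat.mem_smoothNumbers.mpr ⟨one_ne_zero, by simp⟩) fun p hp => ?_
  obtain ⟨hp, hpz⟩ := mem_filter.mp hp
  have hp := Nat.prime_of_mem_primeFactors hp
  simpa using Nat.smoothNumbers_mono (Nat.succ_le_succ (Nat.le_floor hpz))
    (Nat.pow_mul_mem_smoothNumbers hp.ne_zero (n.factorization p)
      (Nat.mem_smoothNumbers_of_lt one_pos hp.one_lt))

theorem card_filter_exists_dvd_le (X : ℕ) (M : Finset ℕ) :
    #{n ∈ Ioc 0 X | ∃ m ∈ M, m ∣ n} ≤ ∑ m ∈ M, X / m := by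
  calc #{n ∈ Ioc 0 X | ∃ m ∈ M, m ∣ n} ≤ #(M.biUnion fun m => {n ∈ Ioc 0 X | m ∣ n}) := by
        refine card_le_card fun n hn => ?_
        obtain ⟨hn, m, hm, hmn⟩ := mem_filter.mp hn
        exact mem_biUnion.mpr ⟨m, hm, mem_filter.mpr ⟨hn, hmn⟩⟩
    _ ≤ ∑ m ∈ M, #{n ∈ Ioc 0 X | m ∣ n} := card_biUnion_le
    _ = ∑ m ∈ M, X / m := sum_congr rfl fun m _ => Nat.Ioc_filter_dvd_card_eq_div X m

theorem sum_rpow_le_prod_primesBelow {N : ℕ} {c : ℝ} (hc : c < 0) {M : Finset ℕ}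
    (hM : ∀ m ∈ M, m ∈ N.smoothNumbers) :
    ∑ m ∈ M, (m : ℝ) ^ c ≤ ∏ p ∈ N.primesBelow, (1 - (p : ℝ) ^ c)⁻¹ := by
  let f : ℕ →* ℝ :=
    { toFun := fun n => (n : ℝ) ^ c
      map_one' := by simp
      map_mul' := fun m n => by push_cast; exact mul_rpow m.cast_nonneg n.cast_nonneg }
  have hf : ∀ {p : ℕ}, p.Prime → ‖f p‖ < 1 := fun {p} hp => by
    have : (1 : ℝ) < p := mod_cast hp.one_lt
    show ‖(p : ℝ) ^ c‖ < 1
    rw [norm_of_nonneg (by positivity)]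
    exact rpow_lt_one_of_one_lt_of_neg this hc
  rw [← sum_subtype_of_mem _ hM]
  exact sum_le_hasSum _ (fun m _ => rpow_nonneg m.1.cast_nonneg c)
    (EulerProduct.summable_and_hasSum_smoothNumbers_prod_primesBelow_geometric hf N).2

theorem card_filter_exists_dvd_le_rankin (X N : ℕ) {y σ : ℝ} (hy : 0 < y) (hσ0 : 0 ≤ σ)
    (hσ1 : σ < 1) {M : Finset ℕ} (hM : ∀ m ∈ M, m ∈ N.smoothNumbers ∧ y < m) :
    (#{n ∈ Ioc 0 X | ∃ m ∈ M, m ∣ n} : ℝ) ≤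
      X * y ^ (-σ) * ∏ p ∈ N.primesBelow, (1 - (p : ℝ) ^ (σ - 1))⁻¹ := by
  have hterm : ∀ m ∈ M, ((X / m : ℕ) : ℝ) ≤ X * y ^ (-σ) * (m : ℝ) ^ (σ - 1) := fun m hm => by
    have hym := (hM m hm).2
    have hm : (0 : ℝ) < m := hy.trans hym
    -- Rankin's trick: `1 ≤ (m / y) ^ σ`
    calc ((X / m : ℕ) : ℝ) ≤ X / m := Nat.cast_div_le
      _ ≤ X / m * (m / y) ^ σ := le_mul_of_one_le_right (by positivity)
          (one_le_rpow ((one_le_div hy).mpr hym.le) hσ0)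
      _ = X * y ^ (-σ) * (m : ℝ) ^ (σ - 1) := by
          rw [div_rpow hm.le hy.le, rpow_neg hy.le, rpow_sub hm, rpow_one]
          ring
  calc (#{n ∈ Ioc 0 X | ∃ m ∈ M, m ∣ n} : ℝ) ≤ ∑ m ∈ M, ((X / m : ℕ) : ℝ) :=
        mod_cast card_filter_exists_dvd_le X M
    _ ≤ ∑ m ∈ M, X * y ^ (-σ) * (m : ℝ) ^ (σ - 1) := sum_le_sum hterm
    _ ≤ X * y ^ (-σ) * ∏ p ∈ N.primesBelow, (1 - (p : ℝ) ^ (σ - 1))⁻¹ := by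
        rw [← mul_sum]
        gcongr
        exact sum_rpow_le_prod_primesBelow (by linarith) fun m hm => (hM m hm).1

theorem ncard_smoothPart_gt_le {x z y σ : ℝ} (hx : 0 ≤ x) (hy : 0 < y) (hσ0 : 0 ≤ σ)
    (hσ1 : σ < 1) :
    ({n : ℕ | 1 ≤ n ∧ (n : ℝ) ≤ x ∧ y < smoothPart z n}.ncard : ℝ) ≤
      x * y ^ (-σ) * ∏ p ∈ (⌊z⌋₊ + 1).primesBelow, (1 - (p : ℝ) ^ (σ - 1))⁻¹ := by
  set S := {n ∈ Ioc 0 ⌊x⌋₊ | y < smoothPart z n}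
  have hsub : {n : ℕ | 1 ≤ n ∧ (n : ℝ) ≤ x ∧ y < smoothPart z n} ⊆
      ↑{n ∈ Ioc 0 ⌊x⌋₊ | ∃ m ∈ S.image (smoothPart z), m ∣ n} := fun n ⟨hn1, hnx, hny⟩ => by
    have hn : n ∈ Ioc 0 ⌊x⌋₊ := mem_Ioc.mpr ⟨hn1, Nat.le_floor hnx⟩
    exact mem_filter.mpr ⟨hn, smoothPart z n,
      mem_image_of_mem _ (mem_filter.mpr ⟨hn, hny⟩), smoothPart_dvd z n⟩
  have hM : ∀ m ∈ S.image (smoothPart z), m ∈ (⌊z⌋₊ + 1).smoothNumbers ∧ y < m := by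
    simp only [mem_image, S, mem_filter]
    rintro _ ⟨n, ⟨-, hny⟩, rfl⟩
    exact ⟨smoothPart_mem_smoothNumbers z n, hny⟩
  calc ({n : ℕ | 1 ≤ n ∧ (n : ℝ) ≤ x ∧ y < smoothPart z n}.ncard : ℝ)
      ≤ #{n ∈ Ioc 0 ⌊x⌋₊ | ∃ m ∈ S.image (smoothPart z), m ∣ n} := by
        rw [← Set.ncard_coe_finset]
        exact mod_cast Set.ncard_le_ncard hsub (finite_toSet _)
    _ ≤ ⌊x⌋₊ * y ^ (-σ) * ∏ p ∈ (⌊z⌋₊ + 1).primesBelow, (1 - (p : ℝ) ^ (σ - 1))⁻¹ :=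
        card_filter_exists_dvd_le_rankin _ _ hy hσ0 hσ1 hM
    _ ≤ x * y ^ (-σ) * ∏ p ∈ (⌊z⌋₊ + 1).primesBelow, (1 - (p : ℝ) ^ (σ - 1))⁻¹ := by
        have : 0 ≤ ∏ p ∈ (⌊z⌋₊ + 1).primesBelow, (1 - (p : ℝ) ^ (σ - 1))⁻¹ := by
          refine prod_nonneg fun p hp => inv_nonneg.mpr (sub_nonneg.mpr ?_)
          exact rpow_le_one_of_one_le_of_nonpos
            (mod_cast (Nat.prime_of_mem_primesBelow hp).one_le) (by linarith)
        gcongr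
        exact Nat.floor_le hx

theorem card_mul_le_of_log_two_eq {k : ℕ} {s : Finset ℕ}
    (hs : ∀ p ∈ s, p.Prime ∧ Nat.log 2 p = k) : (#s * k : ℝ) ≤ 2 ^ (k + 2) := by
  have hsub : s ⊆ (2 ^ (k + 1)).primesLE := fun p hp => by
    obtain ⟨hp, rfl⟩ := hs p hp
    exact Nat.mem_primesLE.mpr ⟨(Nat.lt_pow_succ_log_self one_lt_two p).le, hp⟩
  have hlog : ∀ p ∈ s, k * log 2 ≤ log p := fun p hp => by
    obtain ⟨hp, rfl⟩ := hs p hp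
    rw [← Real.log_pow]
    exact log_le_log (by positivity) (mod_cast Nat.pow_log_le_self 2 hp.ne_zero)
  have hlog2 : 0 < log 2 := log_pos one_lt_two
  have hlog4 : log 4 = 2 * log 2 := by
    rw [show (4 : ℝ) = 2 ^ 2 by norm_num, Real.log_pow]; norm_num
  refine le_of_mul_le_mul_right ?_ hlog2
  calc (#s * k : ℝ) * log 2 = ∑ p ∈ s, k * log 2 := by rw [sum_const, nsmul_eq_mul, mul_assoc]
    _ ≤ ∑ p ∈ s, log p := sum_le_sum hlog
    _ ≤ ∑ p ∈ Nat.primesLE (2 ^ (k + 1)), log p :=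
      sum_le_sum_of_subset_of_nonneg hsub fun p _ _ => log_natCast_nonneg p
    _ = Chebyshev.theta (2 ^ (k + 1) : ℕ) := (Chebyshev.theta_eq_sum_primesLE_log _).symm
    _ ≤ log 4 * (2 ^ (k + 1) : ℕ) := Chebyshev.theta_le_log4_mul_x (Nat.cast_nonneg _)
    _ = 2 ^ (k + 2) * log 2 := by rw [hlog4]; push_cast; ring

theorem mul_sum_rpow_le_of_log_two_eq {k : ℕ} {s : Finset ℕ}
    (hs : ∀ p ∈ s, p.Prime ∧ Nat.log 2 p = k) {σ : ℝ} (hσ : σ ≤ 1) :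
    k * ∑ p ∈ s, (p : ℝ) ^ (σ - 1) ≤ 4 * ((2 : ℝ) ^ k) ^ σ := by
  have hterm : ∀ p ∈ s, (p : ℝ) ^ (σ - 1) ≤ ((2 : ℝ) ^ k) ^ (σ - 1) := fun p hp => by
    obtain ⟨hp, rfl⟩ := hs p hp
    exact rpow_le_rpow_of_nonpos (by positivity)
      (mod_cast Nat.pow_log_le_self 2 hp.ne_zero) (by linarith)
  calc k * ∑ p ∈ s, (p : ℝ) ^ (σ - 1) ≤ k * (#s * ((2 : ℝ) ^ k) ^ (σ - 1)) := by
        gcongr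
        simpa using sum_le_sum hterm
    _ = (#s * k) * ((2 : ℝ) ^ k) ^ (σ - 1) := by ring
    _ ≤ 2 ^ (k + 2) * ((2 : ℝ) ^ k) ^ (σ - 1) := by
        gcongr
        exact card_mul_le_of_log_two_eq hs
    _ = 4 * ((2 : ℝ) ^ k) ^ σ := by
        rw [rpow_sub (by positivity), rpow_one, pow_add]
        field_simp
        ring

theorem exp_le_one_add_mul_exp (a : ℝ) : exp a ≤ 1 + a * exp a := by
  have h := mul_le_mul_of_nonneg_right (add_one_le_exp (-a)) (exp_pos a).le
  rw [← exp_add, neg_add_cancel, exp_zero] at h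
  linarith

theorem sum_Icc_two_pow_rpow_div_le (K : ℕ) {σ : ℝ} (hσ : 0 ≤ σ) :
    ∑ k ∈ Icc 1 K, ((2 : ℝ) ^ k) ^ σ / k ≤ 1 + log K + σ * K * log 2 * ((2 : ℝ) ^ K) ^ σ := by
  have hterm : ∀ k ∈ Icc 1 K,
      ((2 : ℝ) ^ k) ^ σ / k ≤ (k : ℝ)⁻¹ + σ * log 2 * ((2 : ℝ) ^ K) ^ σ := fun k hk => by
    obtain ⟨hk1, hkK⟩ := mem_Icc.mp hk
    have hk : (0 : ℝ) < k := by exact_mod_cast hk1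
    have hexp : ((2 : ℝ) ^ k) ^ σ = exp (k * σ * log 2) := by
      rw [rpow_def_of_pos (by positivity), Real.log_pow]; ring_nf
    have hmono : ((2 : ℝ) ^ k) ^ σ ≤ ((2 : ℝ) ^ K) ^ σ := by gcongr; norm_num
    rw [div_le_iff₀ hk]
    calc ((2 : ℝ) ^ k) ^ σ ≤ 1 + k * σ * log 2 * ((2 : ℝ) ^ k) ^ σ := by
          simpa only [hexp] using exp_le_one_add_mul_exp (k * σ * log 2)
      _ ≤ 1 + k * σ * log 2 * ((2 : ℝ) ^ K) ^ σ := by gcongr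
      _ = ((k : ℝ)⁻¹ + σ * log 2 * ((2 : ℝ) ^ K) ^ σ) * k := by field_simp
  calc ∑ k ∈ Icc 1 K, ((2 : ℝ) ^ k) ^ σ / k
      ≤ ∑ k ∈ Icc 1 K, ((k : ℝ)⁻¹ + σ * log 2 * ((2 : ℝ) ^ K) ^ σ) := sum_le_sum hterm
    _ = harmonic K + σ * K * log 2 * ((2 : ℝ) ^ K) ^ σ := by
        rw [sum_add_distrib, harmonic_eq_sum_Icc, sum_const, Nat.card_Icc]
        push_cast
        ring
    _ ≤ 1 + log K + σ * K * log 2 * ((2 : ℝ) ^ K) ^ σ := by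
        gcongr
        exact harmonic_le_one_add_log K

theorem sum_primesBelow_rpow_le {N : ℕ} (hN : 2 ≤ N) {σ : ℝ} (hσ0 : 0 ≤ σ) (hσ1 : σ ≤ 1) :
    ∑ p ∈ N.primesBelow, (p : ℝ) ^ (σ - 1) ≤ 4 * (2 + log (log N) + σ * log N * (N : ℝ) ^ σ) := by
  set K := Nat.log 2 N
  have hK : 1 ≤ K := Nat.log_pos one_lt_two hN
  have hmaps : ∀ p ∈ N.primesBelow, Nat.log 2 p ∈ Icc 1 K := fun p hp => mem_Icc.mpr
    ⟨Nat.log_pos one_lt_two (Nat.prime_of_mem_primesBelow hp).two_le,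
      Nat.log_mono_right (Nat.lt_of_mem_primesBelow hp).le⟩
  have h2K : ((2 : ℝ) ^ K) ≤ N := mod_cast Nat.pow_log_le_self 2 (by omega)
  have hKlog : K * log 2 ≤ log N := by
    rw [← Real.log_pow]; exact log_le_log (by positivity) h2K
  have hlogN : 0 < log N := log_pos (by exact_mod_cast hN)
  have hlogK : log K ≤ 1 + log (log N) := by
    have hK2 : (K : ℝ) ≤ 2 * log N := by
      have := log_two_gt_d9
      nlinarith [(Nat.one_le_cast (α := ℝ)).mpr hK]
    calc log K ≤ log (2 * log N) := log_le_log (by positivity) hK2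
      _ = log 2 + log (log N) := log_mul two_ne_zero hlogN.ne'
      _ ≤ 1 + log (log N) := by linarith [log_two_lt_d9]
  rw [← sum_fiberwise_of_maps_to hmaps]
  calc ∑ k ∈ Icc 1 K, ∑ p ∈ N.primesBelow with Nat.log 2 p = k, (p : ℝ) ^ (σ - 1)
      ≤ ∑ k ∈ Icc 1 K, 4 * (((2 : ℝ) ^ k) ^ σ / k) := by
        refine sum_le_sum fun k hk => ?_
        have hk : (0 : ℝ) < k := by exact_mod_cast (mem_Icc.mp hk).1
        rw [mul_div_assoc', le_div_iff₀ hk, mul_comm]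
        refine mul_sum_rpow_le_of_log_two_eq (fun p hp => ?_) hσ1
        obtain ⟨hp, hpk⟩ := mem_filter.mp hp
        exact ⟨Nat.prime_of_mem_primesBelow hp, hpk⟩
    _ ≤ 4 * (1 + log K + σ * K * log 2 * ((2 : ℝ) ^ K) ^ σ) := by
        rw [← mul_sum]; gcongr; exact sum_Icc_two_pow_rpow_div_le K hσ0
    _ ≤ 4 * (2 + log (log N) + σ * log N * (N : ℝ) ^ σ) := by
        have : σ * K * log 2 * ((2 : ℝ) ^ K) ^ σ ≤ σ * log N * (N : ℝ) ^ σ := by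
          rw [mul_assoc σ]; gcongr
        linarith

theorem inv_one_sub_le_exp {y : ℝ} (h0 : 0 ≤ y) (h1 : y ≤ 3 / 4) : (1 - y)⁻¹ ≤ exp (4 * y) := by
  rw [inv_le_iff_one_le_mul₀ (by linarith)]
  nlinarith [add_one_le_exp (4 * y)]

theorem prod_primesBelow_inv_one_sub_rpow_le {N : ℕ} (hN : 2 ≤ N) {σ : ℝ} (hσ0 : 0 ≤ σ)
    (hσ1 : σ ≤ 1 / 2) :
    ∏ p ∈ N.primesBelow, (1 - (p : ℝ) ^ (σ - 1))⁻¹ ≤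
      exp (16 * (2 + log (log N) + σ * log N * (N : ℝ) ^ σ)) := by
  have h2σ : (2 : ℝ) ^ σ ≤ 1 + σ := by
    simpa [one_add_one_eq_two] using rpow_one_add_le_one_add_mul_self (s := 1) (by norm_num) hσ0
      (by linarith)
  have hsmall : ∀ p ∈ N.primesBelow, 0 ≤ (p : ℝ) ^ (σ - 1) ∧ (p : ℝ) ^ (σ - 1) ≤ 3 / 4 :=
    fun p hp => by
      have hp : (2 : ℝ) ≤ p := mod_cast (Nat.prime_of_mem_primesBelow hp).two_le
      refine ⟨by positivity, ?_⟩
      calc (p : ℝ) ^ (σ - 1) ≤ 2 ^ (σ - 1) := rpow_le_rpow_of_nonpos two_pos hp (by linarith)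
        _ = 2 ^ σ / 2 := by rw [rpow_sub two_pos, rpow_one]
        _ ≤ 3 / 4 := by linarith
  calc ∏ p ∈ N.primesBelow, (1 - (p : ℝ) ^ (σ - 1))⁻¹
      ≤ ∏ p ∈ N.primesBelow, exp (4 * (p : ℝ) ^ (σ - 1)) := by
        refine prod_le_prod (fun p hp => inv_nonneg.mpr ?_)
          fun p hp => inv_one_sub_le_exp (hsmall p hp).1 (hsmall p hp).2
        linarith [(hsmall p hp).2]
    _ = exp (4 * ∑ p ∈ N.primesBelow, (p : ℝ) ^ (σ - 1)) := by rw [← exp_sum, mul_sum]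
    _ ≤ exp (16 * (2 + log (log N) + σ * log N * (N : ℝ) ^ σ)) := by
        have := sum_primesBelow_rpow_le hN hσ0 (by linarith)
        exact exp_le_exp.mpr (by linarith)

theorem ncard_smoothPart_exp_gt_le {x lz t y : ℝ} (hx : 0 < x) (ht : 0 < t) (hlz : 2 * t ≤ lz)
    (hlogx : lz + 1 ≤ log x) (hy : 0 < y) :
    ({n : ℕ | 1 ≤ n ∧ (n : ℝ) ≤ x ∧ y < smoothPart (exp lz) n}.ncard : ℝ) ≤
      exp (16 * (2 + (t + 1) * exp (t + 1))) * x * log x ^ (16 : ℝ) * y ^ (-(t / lz)) := by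
  set σ := t / lz
  have hlz0 : 0 < lz := by linarith
  have hσ0 : 0 ≤ σ := by positivity
  have hσ1 : σ ≤ 1 / 2 := by rw [div_le_iff₀ hlz0]; linarith
  set N := ⌊exp lz⌋₊ + 1
  have hz : 1 ≤ exp lz := one_le_exp hlz0.le
  have hN : 2 ≤ N := by have : 1 ≤ ⌊exp lz⌋₊ := Nat.le_floor (by exact_mod_cast hz); omega
  have hN0 : (0 : ℝ) < N := by positivity
  have hlogN : log N ≤ lz + 1 := by
    rw [log_le_iff_le_exp hN0, exp_add, mul_comm]
    have hN' : (N : ℝ) ≤ exp lz + 1 := by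
      simp only [N, Nat.cast_add, Nat.cast_one]; linarith [Nat.floor_le (zero_le_one.trans hz)]
    nlinarith [add_one_le_exp 1]
  have hlogN0 : 0 < log N := log_pos (by exact_mod_cast hN)
  have hσlogN : σ * log N ≤ t + 1 := calc
    σ * log N ≤ σ * (lz + 1) := by gcongr
    _ = t + σ := by rw [mul_add, mul_one, div_mul_cancel₀ t hlz0.ne']
    _ ≤ t + 1 := by linarith
  have hNσ : (N : ℝ) ^ σ ≤ exp (t + 1) := by
    rw [rpow_def_of_pos hN0, mul_comm]; exact exp_le_exp.mpr hσlogN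
  have hloglogN : log (log N) ≤ log (log x) := log_le_log hlogN0 (by linarith)
  calc ({n : ℕ | 1 ≤ n ∧ (n : ℝ) ≤ x ∧ y < smoothPart (exp lz) n}.ncard : ℝ)
      ≤ x * y ^ (-σ) * ∏ p ∈ N.primesBelow, (1 - (p : ℝ) ^ (σ - 1))⁻¹ :=
        ncard_smoothPart_gt_le hx.le hy hσ0 (by linarith)
    _ ≤ x * y ^ (-σ) * exp (16 * (2 + log (log N) + σ * log N * (N : ℝ) ^ σ)) := by
        gcongr; exact prod_primesBelow_inv_one_sub_rpow_le hN hσ0 hσ1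
    _ ≤ x * y ^ (-σ) * exp (16 * (2 + (t + 1) * exp (t + 1)) + log (log x) * 16) := by
        have : σ * log N * (N : ℝ) ^ σ ≤ (t + 1) * exp (t + 1) :=
          mul_le_mul hσlogN hNσ (by positivity) (by positivity)
        gcongr
        linarith
    _ = exp (16 * (2 + (t + 1) * exp (t + 1))) * x * log x ^ (16 : ℝ) * y ^ (-σ) := by
        rw [exp_add, rpow_def_of_pos (show 0 < log x by linarith)]
        ring

theorem tendsto_div_log_atTop : Tendsto (fun u => u / log u) atTop atTop := by
  have h := isLittleO_log_id_atTop.tendsto_div_nhds_zero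
  have hpos : ∀ᶠ u in atTop, 0 < log u / id u :=
    (eventually_gt_atTop 1).mono fun u hu => div_pos (log_pos hu) (by simp; linarith)
  exact (tendsto_nhdsWithin_iff.mpr ⟨h, hpos⟩).inv_tendsto_nhdsGT_zero.congr fun u => by simp

theorem stmt5_general (ε : ℝ) (hε0 : 0 < ε) (A : ℝ) (hA : 0 < A) :
    ∃ C > (0 : ℝ), ∃ x₀ : ℝ, ∀ x : ℝ, x₀ ≤ x →
      ({n : ℕ | 1 ≤ n ∧ (n : ℝ) ≤ x ∧
          x ^ ε < (smoothPart (Real.exp (Real.log x / (ε * Real.log (Real.log x)))) n : ℝ)}.ncard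
        : ℝ) ≤ C * x * Real.log x ^ (-A) := by
  set t := (A + 16) / ε ^ 2
  have ht : 0 < t := by positivity
  have hlz : Tendsto (fun x => log x / (ε * log (log x))) atTop atTop := by
    simp_rw [div_mul_eq_div_div_swap]
    exact (tendsto_div_log_atTop.comp tendsto_log_atTop).atTop_div_const hε0
  obtain ⟨x₀, hx₀⟩ := eventually_atTop.mp
    ((eventually_gt_atTop 0).and <| (tendsto_log_atTop.eventually_ge_atTop 2).and <|
      ((tendsto_log_atTop.comp tendsto_log_atTop).eventually_ge_atTop (2 / ε)).and <|
        hlz.eventually_ge_atTop (2 * t))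
  refine ⟨exp (16 * (2 + (t + 1) * exp (t + 1))), exp_pos _, x₀, fun x hx => ?_⟩
  obtain ⟨hx0, hlogx, hL, hlzx⟩ := hx₀ x hx
  simp only [Function.comp_apply, div_le_iff₀ hε0] at hL
  set L := log (log x)
  have hlogx0 : 0 < log x := by linarith
  have hlzlog : log x / (ε * L) + 1 ≤ log x := by
    have : log x / (ε * L) ≤ log x / 2 := div_le_div_of_nonneg_left hlogx0.le two_pos (by linarith)
    linarith
  have hexp : log x ^ (16 : ℝ) * (x ^ ε) ^ (-(t / (log x / (ε * L)))) = log x ^ (-A) := by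
    rw [← rpow_mul hx0.le, rpow_def_of_pos hx0, rpow_def_of_pos hlogx0, rpow_def_of_pos hlogx0,
      ← exp_add]
    congr 1
    simp only [t, L]
    field_simp
    ring
  calc _ ≤ exp (16 * (2 + (t + 1) * exp (t + 1))) * x * log x ^ (16 : ℝ) *
        (x ^ ε) ^ (-(t / (log x / (ε * L)))) :=
        ncard_smoothPart_exp_gt_le hx0 ht hlzx hlzlog (by positivity)
    _ = exp (16 * (2 + (t + 1) * exp (t + 1))) * x * log x ^ (-A) := by rw [mul_assoc, hexp]

/-- Rankin's method bound: for `0 < ε < 1` and `A > 0`, the number of `n ≤ x` whose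
`z`-smooth part exceeds `x^ε`, with `z = exp(log x / (ε log log x))`, is
`≪ x (log x)^{-A}` for `x` sufficiently large. -/
theorem stmt5 (ε : ℝ) (hε0 : 0 < ε) (hε1 : ε < 1) (A : ℝ) (hA : 0 < A) :
    ∃ C > (0 : ℝ), ∃ x₀ : ℝ, ∀ x : ℝ, x₀ ≤ x →
      ({n : ℕ | 1 ≤ n ∧ (n : ℝ) ≤ x ∧
          x ^ ε < (smoothPart (Real.exp (Real.log x / (ε * Real.log (Real.log x)))) n : ℝ)}.ncard
        : ℝ) ≤ C * x * Real.log x ^ (-A) :=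
  stmt5_general ε hε0 A hA
end

section
/- For every integer m ≥ 2 there is a constant C > 0 such that for all reals x ≥ 2: Σ_{n ≤ x} τ_m(n)⁴ ≤ C · x · (log x)^{m⁴ - 1}. -/
/-!
Two ordered factorisations `n = d₁ ⋯ d_a = e₁ ⋯ e_b` are the row and column products of an
`a × b` grid of positive integers (a transportation problem, solved greedily using
`d ∣ ∏ eⱼ → d = ∏ gⱼ` with `gⱼ ∣ eⱼ`), and the grid is an `ab`-fold factorisation of `n` from
which both are recovered. Hence `τ_a τ_b ≤ τ_{ab}` and `τ_m⁴ ≤ τ_{m⁴}`. Finally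
`Σ_{n ≤ x} τ_{k+1}(n)` counts the `(k+1)`-tuples with product `≤ x`; fixing the first entry `d`
gives the recursion `Σ_{d ≤ x} Σ_{n ≤ x/d} τ_k(n)`, and the harmonic bound
`Σ_{d ≤ x} 1/d ≤ 1 + log x` yields `x (1 + log x)^k` by induction.
-/

/-- `tauM m n` is `τ_m(n)`: the number of ordered `m`-tuples `(d₁, …, d_m)` of positive
integers with `d₁ ⋯ d_m = n`. -/
def tauM (m n : ℕ) : ℕ :=
  ((Fintype.piFinset fun _ : Fin m => Finset.Icc 1 n).filter fun t => ∏ i, t i = n).card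

open Finset

lemma exists_dvd_forall_prod_eq_of_dvd_prod {α ι : Type*} [CommMonoid α] [DecompositionMonoid α]
    [Subsingleton αˣ] (s : Finset ι) (f : ι → α) {d : α}
    (hd : d ∣ ∏ j ∈ s, f j) : ∃ g : ι → α, (∀ j ∈ s, g j ∣ f j) ∧ ∏ j ∈ s, g j = d := by
  classical
  induction s using Finset.induction generalizing d with
  | empty =>
    exact ⟨fun _ => 1, by simp, (isUnit_iff_eq_one.mp (isUnit_of_dvd_one (by simpa using hd))).symm⟩
  | @insert a s ha ih =>
    rw [prod_insert ha] at hd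
    obtain ⟨d₁, d₂, hd₁, hd₂, rfl⟩ := exists_dvd_and_dvd_of_dvd_mul hd
    obtain ⟨g, hg, rfl⟩ := ih hd₂
    have hgs : ∀ j ∈ s, Function.update g a d₁ j = g j := fun j hj =>
      Function.update_of_ne (ne_of_mem_of_not_mem hj ha) _ _
    refine ⟨Function.update g a d₁, fun j hj => ?_, ?_⟩
    · rcases mem_insert.mp hj with rfl | hj
      · simpa using hd₁
      · exact (hgs j hj).symm ▸ hg j hj
    · rw [prod_insert ha, Function.update_self, prod_congr rfl hgs]

lemma exists_grid_prod_eq {α ι : Type*} [CommMonoidWithZero α] [IsCancelMulZero α]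
    [DecompositionMonoid α] [Subsingleton αˣ] [Fintype ι] {a : ℕ} (r : Fin a → α) (c : ι → α)
    (hc : ∏ j, c j ≠ 0) (h : ∏ i, r i = ∏ j, c j) :
    ∃ g : Fin a → ι → α, (∀ i, ∏ j, g i j = r i) ∧ (∀ j, ∏ i, g i j = c j) := by
  induction a generalizing c with
  | zero =>
    refine ⟨fun i => i.elim0, fun i => i.elim0, fun j => ?_⟩
    rw [Fin.prod_univ_zero] at h ⊢
    exact (isUnit_iff_eq_one.mp (isUnit_of_dvd_one (h ▸ dvd_prod_of_mem c (mem_univ j)))).symm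
  | succ a ih =>
    have hr₀ : r 0 ∣ ∏ j, c j := h ▸ Fin.prod_univ_succ r ▸ dvd_mul_right _ _
    obtain ⟨g₀, hg₀, hg₀r⟩ := exists_dvd_forall_prod_eq_of_dvd_prod univ c hr₀
    choose c' hc' using fun j => hg₀ j (mem_univ j)
    have hprod : ∏ j, c j = r 0 * ∏ j, c' j := by
      rw [← hg₀r, ← prod_mul_distrib]; exact prod_congr rfl fun j _ => hc' j
    obtain ⟨g', hg'r, hg'c⟩ := ih (fun i => r i.succ) c'
      (right_ne_zero_of_mul (hprod ▸ hc))
      (mul_left_cancel₀ (left_ne_zero_of_mul (hprod ▸ hc))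
        (by rw [← Fin.prod_univ_succ, h, hprod]))
    refine ⟨Fin.cons g₀ g', fun i => ?_, fun j => ?_⟩
    · cases i using Fin.cases with
      | zero => simpa using hg₀r
      | succ i => simpa using hg'r i
    · simp [Fin.prod_univ_succ, hg'c, hc']

lemma le_prod_of_ne_zero {ι : Type*} [Fintype ι] {t : ι → ℕ} (ht : ∀ i, t i ≠ 0) (i : ι) :
    t i ≤ ∏ j, t j :=
  single_le_prod' (fun j _ => Nat.one_le_iff_ne_zero.mpr (ht j)) (mem_univ i)

def factorizations (m n : ℕ) : Finset (Fin m → ℕ) :=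
  (Fintype.piFinset fun _ : Fin m => Icc 1 n).filter fun t => ∏ i, t i = n

lemma tauM_eq_card_factorizations (m n : ℕ) : tauM m n = #(factorizations m n) := rfl

lemma mem_factorizations {m n : ℕ} {t : Fin m → ℕ} :
    t ∈ factorizations m n ↔ (∀ i, t i ≠ 0) ∧ ∏ i, t i = n := by
  simp only [factorizations, mem_filter, Fintype.mem_piFinset, mem_Icc, Nat.one_le_iff_ne_zero]
  exact ⟨fun ⟨ht, hn⟩ => ⟨fun i => (ht i).1, hn⟩,
    fun ⟨ht, hn⟩ => ⟨fun i => ⟨ht i, hn ▸ le_prod_of_ne_zero ht i⟩, hn⟩⟩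

lemma tauM_mul_le (a b n : ℕ) : tauM a n * tauM b n ≤ tauM (a * b) n := by
  let e : Fin a × Fin b ≃ Fin (a * b) := finProdFinEquiv
  let margins (q : Fin (a * b) → ℕ) : (Fin a → ℕ) × (Fin b → ℕ) :=
    (fun i => ∏ j, q (e (i, j)), fun j => ∏ i, q (e (i, j)))
  simp only [tauM_eq_card_factorizations, ← card_product]
  refine card_le_card_of_surjOn margins fun p hp => ?_
  simp only [coe_product, Set.mem_prod, mem_coe, mem_factorizations] at hp
  obtain ⟨⟨hr0, hr⟩, hc0, hc⟩ := hp
  obtain ⟨g, hgr, hgc⟩ := exists_grid_prod_eq p.1 p.2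
    (prod_ne_zero_iff.mpr fun j _ => hc0 j) (hr.trans hc.symm)
  have hg0 : ∀ i j, g i j ≠ 0 := fun i j h => hc0 j (hgc j ▸ prod_eq_zero (mem_univ i) h)
  refine ⟨fun k => g (e.symm k).1 (e.symm k).2,
    mem_factorizations.mpr ⟨fun k => hg0 _ _, ?_⟩, ?_⟩
  · rw [← e.prod_comp, Fintype.prod_prod_type]
    simp [hgr, hr]
  · simp [margins, hgr, hgc]

lemma tauM_pow_le (m n : ℕ) {k : ℕ} (hk : 1 ≤ k) : tauM m n ^ k ≤ tauM (m ^ k) n := by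
  induction k, hk using Nat.le_induction with
  | base => simp
  | succ k _ ih =>
    rw [pow_succ, pow_succ]
    exact (Nat.mul_le_mul_right _ ih).trans (tauM_mul_le _ _ _)

def factorizationsLE (m N : ℕ) : Finset (Fin m → ℕ) :=
  (Fintype.piFinset fun _ : Fin m => Icc 1 N).filter fun t => ∏ i, t i ≤ N

lemma mem_factorizationsLE {m N : ℕ} {t : Fin m → ℕ} :
    t ∈ factorizationsLE m N ↔ (∀ i, t i ≠ 0) ∧ ∏ i, t i ≤ N := by
  simp only [factorizationsLE, mem_filter, Fintype.mem_piFinset, mem_Icc, Nat.one_le_iff_ne_zero]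
  exact ⟨fun ⟨ht, hN⟩ => ⟨fun i => (ht i).1, hN⟩,
    fun ⟨ht, hN⟩ => ⟨fun i => ⟨ht i, (le_prod_of_ne_zero ht i).trans hN⟩, hN⟩⟩

lemma sum_tauM_eq_card_factorizationsLE (m N : ℕ) :
    ∑ n ∈ Icc 1 N, tauM m n = #(factorizationsLE m N) := by
  simp_rw [tauM_eq_card_factorizations]
  rw [card_eq_sum_card_fiberwise (f := fun t => ∏ i, t i) (t := Icc 1 N)]
  · refine sum_congr rfl fun n hn => congrArg card ?_
    ext t
    rw [mem_filter, mem_factorizationsLE, mem_factorizations]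
    exact ⟨fun ⟨ht, htn⟩ => ⟨⟨ht, htn ▸ (mem_Icc.mp hn).2⟩, htn⟩,
      fun ⟨⟨ht, _⟩, htn⟩ => ⟨ht, htn⟩⟩
  · intro t ht
    obtain ⟨ht0, hN⟩ := mem_factorizationsLE.mp ht
    exact mem_Icc.mpr ⟨Nat.one_le_iff_ne_zero.mpr (prod_ne_zero_iff.mpr fun i _ => ht0 i), hN⟩

lemma card_factorizationsLE_succ (m N : ℕ) :
    #(factorizationsLE (m + 1) N) = ∑ d ∈ Icc 1 N, #(factorizationsLE m (N / d)) := by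
  rw [card_eq_sum_card_fiberwise (f := fun t => t 0) (t := Icc 1 N)]
  · refine sum_congr rfl fun d hd => ?_
    have hd0 : 0 < d := (mem_Icc.mp hd).1
    refine card_bij (fun t _ => Fin.tail t) (fun t ht => ?_) (fun t₁ h₁ t₂ h₂ h => ?_)
      (fun u hu => ?_)
    · rw [mem_filter, mem_factorizationsLE, Fin.prod_univ_succ] at ht
      obtain ⟨⟨ht0, hN⟩, rfl⟩ := ht
      refine mem_factorizationsLE.mpr ⟨fun i => ht0 i.succ, ?_⟩
      exact (Nat.le_div_iff_mul_le hd0).mpr (by rw [mul_comm]; exact hN)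
    · rw [← Fin.cons_self_tail t₁, ← Fin.cons_self_tail t₂, (mem_filter.mp h₁).2,
        (mem_filter.mp h₂).2]
      exact congrArg _ h
    · obtain ⟨hu0, hN⟩ := mem_factorizationsLE.mp hu
      refine ⟨Fin.cons d u, mem_filter.mpr ⟨mem_factorizationsLE.mpr ⟨fun i => ?_, ?_⟩, rfl⟩,
        Fin.tail_cons _ _⟩
      · cases i using Fin.cases <;> simp [hd0.ne', hu0]
      · rw [Fin.prod_univ_succ]
        simpa using (Nat.mul_le_mul_left d hN).trans (Nat.mul_div_le N d)
  · intro t ht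
    obtain ⟨ht0, hN⟩ := mem_factorizationsLE.mp ht
    exact mem_Icc.mpr ⟨Nat.one_le_iff_ne_zero.mpr (ht0 0), (le_prod_of_ne_zero ht0 0).trans hN⟩

lemma sum_Icc_inv_le_one_add_log {x : ℝ} (hx : 1 ≤ x) :
    ∑ d ∈ Icc 1 ⌊x⌋₊, (d : ℝ)⁻¹ ≤ 1 + Real.log x := by
  have := harmonic_floor_le_one_add_log x hx
  rw [harmonic_eq_sum_Icc] at this
  push_cast at this
  exact this

lemma card_factorizationsLE_le (m : ℕ) {x : ℝ} (hx : 1 ≤ x) :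
    (#(factorizationsLE (m + 1) ⌊x⌋₊) : ℝ) ≤ x * (1 + Real.log x) ^ m := by
  induction m generalizing x with
  | zero =>
    have hone : ∀ d ∈ Icc 1 ⌊x⌋₊, (#(factorizationsLE 0 (⌊x⌋₊ / d)) : ℝ) ≤ 1 := fun d _ => by
      exact_mod_cast card_le_one_of_subsingleton _
    calc (#(factorizationsLE (0 + 1) ⌊x⌋₊) : ℝ)
        = ∑ d ∈ Icc 1 ⌊x⌋₊, (#(factorizationsLE 0 (⌊x⌋₊ / d)) : ℝ) := by
          exact_mod_cast card_factorizationsLE_succ 0 ⌊x⌋₊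
      _ ≤ ∑ d ∈ Icc 1 ⌊x⌋₊, (1 : ℝ) := sum_le_sum hone
      _ ≤ x * (1 + Real.log x) ^ 0 := by simpa using Nat.floor_le (by linarith)
  | succ m ih =>
    have hlog : 0 ≤ 1 + Real.log x := by linarith [Real.log_nonneg hx]
    have hterm : ∀ d ∈ Icc 1 ⌊x⌋₊,
        (#(factorizationsLE (m + 1) (⌊x⌋₊ / d)) : ℝ)
          ≤ x * (1 + Real.log x) ^ m * (d : ℝ)⁻¹ := by
      intro d hd
      have hd0 : (0 : ℝ) < d := by exact_mod_cast (mem_Icc.mp hd).1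
      have hdx : (d : ℝ) ≤ x :=
        (Nat.cast_le.mpr (mem_Icc.mp hd).2).trans (Nat.floor_le (by linarith))
      have hxd : 1 ≤ x / d := (one_le_div hd0).mpr hdx
      calc (#(factorizationsLE (m + 1) (⌊x⌋₊ / d)) : ℝ)
          ≤ x / d * (1 + Real.log (x / d)) ^ m := Nat.floor_div_natCast x d ▸ ih hxd
        _ ≤ x / d * (1 + Real.log x) ^ m := by
          gcongr
          · linarith [Real.log_nonneg hxd]
          · exact div_le_self (by linarith) (by exact_mod_cast (mem_Icc.mp hd).1)
        _ = x * (1 + Real.log x) ^ m * (d : ℝ)⁻¹ := by ring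
    calc (#(factorizationsLE (m + 1 + 1) ⌊x⌋₊) : ℝ)
        = ∑ d ∈ Icc 1 ⌊x⌋₊, (#(factorizationsLE (m + 1) (⌊x⌋₊ / d)) : ℝ) := by
          exact_mod_cast card_factorizationsLE_succ (m + 1) ⌊x⌋₊
      _ ≤ x * (1 + Real.log x) ^ m * ∑ d ∈ Icc 1 ⌊x⌋₊, (d : ℝ)⁻¹ := by
          rw [mul_sum]; exact sum_le_sum hterm
      _ ≤ x * (1 + Real.log x) ^ m * (1 + Real.log x) := by
          gcongr
          exact sum_Icc_inv_le_one_add_log hx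
      _ = x * (1 + Real.log x) ^ (m + 1) := by ring

lemma one_add_log_le_mul_log {x : ℝ} (hx : 2 ≤ x) :
    1 + Real.log x ≤ (1 + (Real.log 2)⁻¹) * Real.log x := by
  have hlog2 : 0 < Real.log 2 := Real.log_pos one_lt_two
  have hlog : Real.log 2 ≤ Real.log x := Real.log_le_log two_pos hx
  have : 1 ≤ (Real.log 2)⁻¹ * Real.log x := by rwa [inv_mul_eq_div, one_le_div hlog2]
  linarith

/-- For every `m ≥ 2` one has `Σ_{n ≤ x} τ_m(n)⁴ ≪ x (log x)^{m⁴ - 1}`. -/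
theorem stmt6 (m : ℕ) (hm : 2 ≤ m) :
    ∃ C > (0 : ℝ), ∀ x : ℝ, 2 ≤ x →
      (∑ n ∈ Finset.Icc 1 ⌊x⌋₊, (tauM m n : ℝ) ^ 4)
        ≤ C * x * Real.log x ^ (m ^ 4 - 1) := by
  refine ⟨(1 + (Real.log 2)⁻¹) ^ (m ^ 4 - 1), by positivity, fun x hx => ?_⟩
  have hm4 : m ^ 4 - 1 + 1 = m ^ 4 := Nat.sub_add_cancel (Nat.one_le_pow _ _ (by omega))
  calc ∑ n ∈ Icc 1 ⌊x⌋₊, (tauM m n : ℝ) ^ 4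
      ≤ ∑ n ∈ Icc 1 ⌊x⌋₊, (tauM (m ^ 4) n : ℝ) :=
        sum_le_sum fun n _ => by exact_mod_cast tauM_pow_le m n (k := 4) (by norm_num)
    _ = #(factorizationsLE (m ^ 4 - 1 + 1) ⌊x⌋₊) := by
        rw [hm4]; exact_mod_cast sum_tauM_eq_card_factorizationsLE _ _
    _ ≤ x * (1 + Real.log x) ^ (m ^ 4 - 1) := card_factorizationsLE_le _ (by linarith)
    _ ≤ x * ((1 + (Real.log 2)⁻¹) * Real.log x) ^ (m ^ 4 - 1) := by
        gcongr
        · linarith [Real.log_nonneg (by linarith : (1 : ℝ) ≤ x)]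
        · exact one_add_log_le_mul_log hx
    _ = (1 + (Real.log 2)⁻¹) ^ (m ^ 4 - 1) * x * Real.log x ^ (m ^ 4 - 1) := by
        rw [mul_pow]; ring
end

section
/- For every integer m ≥ 1 there is a constant C > 0 such that for every multiplicative function λ : ℕ₊ → ℂ satisfying |λ(n)| ≤ τ_m(n) for all n ≥ 1, and every real z ≥ 2: the (convergent) sum of |λ(a)|/φ(a) over all z-smooth positive integers a satisfies Σ_{a z-smooth} |λ(a)|/φ(a) ≤ C · Π_{p ≤ z, p prime} (1 + |λ(p)|/p). -/
open Finset

lemma tauM_le_card_divisors_pow (m : ℕ) {n : ℕ} (hn : n ≠ 0) :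
    tauM m n ≤ #n.divisors ^ m := by
  calc tauM m n ≤ #(Fintype.piFinset fun _ : Fin m => n.divisors) := by
        refine card_le_card fun t ht => ?_
        simp only [mem_filter, Fintype.mem_piFinset] at ht ⊢
        exact fun i => Nat.mem_divisors.mpr ⟨ht.2 ▸ dvd_prod_of_mem t (mem_univ i), hn⟩
    _ = #n.divisors ^ m := by simp

lemma tauM_prime_pow_le {p : ℕ} (hp : p.Prime) (m k : ℕ) : tauM m (p ^ k) ≤ (k + 1) ^ m := by
  simpa [Nat.divisors_prime_pow hp] using tauM_le_card_divisors_pow m (pow_ne_zero k hp.ne_zero)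

lemma summable_add_pow_mul_geometric {r : ℝ} (hr : ‖r‖ < 1) (m : ℕ) (c : ℝ) :
    Summable fun k : ℕ => ((k : ℝ) + c) ^ m * r ^ k := by
  simp_rw [add_pow, sum_mul]
  exact summable_sum fun i _ =>
    ((summable_pow_mul_geometric_of_norm_lt_one i hr).mul_right (c ^ (m - i) * m.choose i)).congr
      fun k => by ring

lemma pow_le_two_mul_totient_prime_pow {p : ℕ} (hp : p.Prime) (k : ℕ) :
    p ^ k ≤ 2 * (p ^ k).totient := by
  cases k with
  | zero => simp
  | succ k =>
    rw [Nat.totient_prime_pow_succ hp, pow_succ]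
    have := hp.two_le
    calc p ^ k * p ≤ p ^ k * (2 * (p - 1)) := Nat.mul_le_mul_left _ (by omega)
      _ = 2 * (p ^ k * (p - 1)) := by ring

lemma div_totient_prime_pow_le {p : ℕ} (hp : p.Prime) (k : ℕ) {a : ℝ} (ha : 0 ≤ a) :
    a / (p ^ k).totient ≤ 2 * a / p ^ k := by
  have hpos : (0 : ℝ) < (p ^ k).totient := by
    exact_mod_cast Nat.totient_pos.mpr (pow_pos hp.pos k)
  have hp0 : (0 : ℝ) < p := by exact_mod_cast hp.pos
  rw [div_le_div_iff₀ hpos (by positivity), mul_comm 2 a, mul_assoc]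
  gcongr
  exact_mod_cast pow_le_two_mul_totient_prime_pow hp k

lemma div_totient_prime_le {p : ℕ} (hp : p.Prime) {a : ℝ} (ha : 0 ≤ a) :
    a / p.totient ≤ a / p + 2 * a / p ^ 2 := by
  have hp2 : (2 : ℝ) ≤ p := by exact_mod_cast hp.two_le
  rw [Nat.totient_prime hp, Nat.cast_sub hp.one_le, Nat.cast_one,
    div_add_div _ _ (by positivity) (by positivity), div_le_div_iff₀ (by linarith) (by positivity)]
  nlinarith [mul_nonneg ha (sub_nonneg.2 hp2)]

lemma div_totient_prime_pow_add_two_le {p : ℕ} (hp : p.Prime) (k : ℕ) {a : ℝ} (ha : 0 ≤ a) :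
    a / (p ^ (k + 2)).totient ≤ 2 * a * (1 / 2) ^ k / p ^ 2 := by
  have hp2 : (2 : ℝ) ≤ p := by exact_mod_cast hp.two_le
  refine (div_totient_prime_pow_le hp (k + 2) ha).trans ?_
  calc 2 * a / p ^ (k + 2) = 2 * a / (p ^ k * p ^ 2) := by rw [pow_add]
    _ ≤ 2 * a / (2 ^ k * p ^ 2) := by gcongr
    _ = 2 * a * (1 / 2) ^ k / p ^ 2 := by rw [one_div_pow, mul_one_div, div_div]

/-- In the local factor bound `1 + ‖λ p‖ / p + E / p ^ 2`, the term `2 ^ (m + 1)` of `E` covers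
`‖λ p‖ / φ p - ‖λ p‖ / p` and the series covers the prime powers `p ^ (k + 2)`. -/
noncomputable def eulerFactorConst (m : ℕ) : ℝ :=
  2 ^ (m + 1) + 2 * ∑' k : ℕ, ((k : ℝ) + 3) ^ m * (1 / 2) ^ k

lemma eulerFactorConst_nonneg (m : ℕ) : 0 ≤ eulerFactorConst m := by
  unfold eulerFactorConst
  positivity

theorem summable_and_tsum_div_totient_prime_pow_le {p : ℕ} (hp : p.Prime) {m : ℕ} {a : ℕ → ℝ}
    (ha0 : ∀ k, 0 ≤ a k) (ha : ∀ k, a k ≤ ((k : ℝ) + 1) ^ m) :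
    Summable (fun k => a k / (p ^ k).totient) ∧
      ∑' k, a k / (p ^ k).totient ≤ a 0 + a 1 / p + eulerFactorConst m / p ^ 2 := by
  set g : ℕ → ℝ := fun k => a k / (p ^ k).totient
  set D : ℝ := ∑' k : ℕ, ((k : ℝ) + 3) ^ m * (1 / 2) ^ k
  have hD : Summable fun k : ℕ => ((k : ℝ) + 3) ^ m * (1 / 2) ^ k :=
    summable_add_pow_mul_geometric (by norm_num) m 3
  have hg0 : ∀ k, 0 ≤ g k := fun k => div_nonneg (ha0 k) (Nat.cast_nonneg _)
  have htail : ∀ k, g (k + 2) ≤ 2 * (((k : ℝ) + 3) ^ m * (1 / 2) ^ k) / p ^ 2 := fun k => by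
    refine (div_totient_prime_pow_add_two_le hp k (ha0 _)).trans ?_
    rw [mul_assoc]
    gcongr
    calc a (k + 2) ≤ ((k + 2 : ℕ) + 1 : ℝ) ^ m := ha _
      _ = ((k : ℝ) + 3) ^ m := by push_cast; ring
  have hmajorant := (hD.mul_left 2).div_const ((p : ℝ) ^ 2)
  have hg_tail : Summable fun k => g (k + 2) :=
    hmajorant.of_nonneg_of_le (fun k => hg0 _) htail
  have hg : Summable g := (summable_nat_add_iff 2).mp hg_tail
  refine ⟨hg, ?_⟩
  have hg1 : g 1 ≤ a 1 / p + 2 ^ (m + 1) / p ^ 2 := by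
    have h := div_totient_prime_le hp (ha0 1)
    have h2 : 2 * a 1 ≤ 2 ^ (m + 1) := by
      have := ha 1
      norm_num at this
      rw [pow_succ']
      linarith
    simp only [g, pow_one]
    calc a 1 / p.totient ≤ a 1 / p + 2 * a 1 / p ^ 2 := h
      _ ≤ a 1 / p + 2 ^ (m + 1) / p ^ 2 := by gcongr
  have hg_tail_sum : ∑' k, g (k + 2) ≤ 2 * D / p ^ 2 := by
    rw [← tsum_mul_left, ← tsum_div_const]
    exact hg_tail.tsum_le_tsum htail hmajorant
  rw [← hg.sum_add_tsum_nat_add 2]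
  simp only [sum_range_succ, sum_range_zero, eulerFactorConst]
  simp only [g, pow_zero, Nat.totient_one, Nat.cast_one, div_one] at hg1 ⊢
  rw [add_div]
  linarith

lemma summable_and_tsum_norm_div_totient_prime_pow_le {m p : ℕ} (hp : p.Prime) {lam : ℕ → ℂ}
    (hlam1 : lam 1 = 1) (hlam : ∀ n : ℕ, 1 ≤ n → ‖lam n‖ ≤ tauM m n) :
    Summable (fun k => ‖lam (p ^ k)‖ / (p ^ k).totient) ∧
      ∑' k, ‖lam (p ^ k)‖ / (p ^ k).totient ≤ 1 + ‖lam p‖ / p + eulerFactorConst m / p ^ 2 := by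
  have hpow (k : ℕ) : ‖lam (p ^ k)‖ ≤ ((k : ℝ) + 1) ^ m :=
    (hlam _ (Nat.one_le_iff_ne_zero.mpr (pow_ne_zero k hp.ne_zero))).trans
      (by exact_mod_cast tauM_prime_pow_le hp m k)
  simpa only [pow_zero, hlam1, norm_one, pow_one] using
    summable_and_tsum_div_totient_prime_pow_le hp (fun _ => norm_nonneg _) hpow

lemma prod_one_add_add_le_exp_sum_mul_prod {ι : Type*} (s : Finset ι) {x y : ι → ℝ}
    (hx : ∀ i ∈ s, 0 ≤ x i) (hy : ∀ i ∈ s, 0 ≤ y i) :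
    ∏ i ∈ s, (1 + x i + y i) ≤ Real.exp (∑ i ∈ s, y i) * ∏ i ∈ s, (1 + x i) := by
  rw [Real.exp_sum, ← prod_mul_distrib]
  refine prod_le_prod (fun i hi => by linarith [hx i hi, hy i hi]) fun i hi => ?_
  calc 1 + x i + y i ≤ (y i + 1) * (1 + x i) := by nlinarith [mul_nonneg (hx i hi) (hy i hi)]
    _ ≤ Real.exp (y i) * (1 + x i) := by
      gcongr
      · linarith [hx i hi]
      · exact Real.add_one_le_exp _

lemma prod_le_exp_mul_prod_of_le_one_add_add {s : Finset ℕ} {g x : ℕ → ℝ} {E : ℝ} (hE : 0 ≤ E)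
    (hg : ∀ p ∈ s, 0 ≤ g p) (hx : ∀ p ∈ s, 0 ≤ x p) (hgx : ∀ p ∈ s, g p ≤ 1 + x p + E / p ^ 2) :
    ∏ p ∈ s, g p ≤ Real.exp (E * ∑' n : ℕ, 1 / (n : ℝ) ^ 2) * ∏ p ∈ s, (1 + x p) := by
  have hsum : ∑ p ∈ s, E / (p : ℝ) ^ 2 ≤ E * ∑' n : ℕ, 1 / (n : ℝ) ^ 2 := by
    simp_rw [div_eq_mul_one_div E, ← mul_sum]
    gcongr
    exact Summable.sum_le_tsum _ (fun _ _ => by positivity)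
      (Real.summable_one_div_nat_pow.mpr one_lt_two)
  calc ∏ p ∈ s, g p ≤ ∏ p ∈ s, (1 + x p + E / p ^ 2) := prod_le_prod hg hgx
    _ ≤ Real.exp (∑ p ∈ s, E / (p : ℝ) ^ 2) * ∏ p ∈ s, (1 + x p) :=
      prod_one_add_add_le_exp_sum_mul_prod s hx fun p _ => by positivity
    _ ≤ Real.exp (E * ∑' n : ℕ, 1 / (n : ℝ) ^ 2) * ∏ p ∈ s, (1 + x p) := by
      gcongr
      exact prod_nonneg fun p hp => by linarith [hx p hp]

lemma norm_div_totient_mul_of_coprime {lam : ℕ → ℂ}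
    (hmul : ∀ a b : ℕ, 1 ≤ a → 1 ≤ b → Nat.Coprime a b → lam (a * b) = lam a * lam b)
    {a b : ℕ} (hab : a.Coprime b) :
    ‖lam (a * b)‖ / (a * b).totient = ‖lam a‖ / a.totient * (‖lam b‖ / b.totient) := by
  rcases Nat.eq_zero_or_pos a with rfl | ha
  · simp
  rcases Nat.eq_zero_or_pos b with rfl | hb
  · simp
  rw [hmul a b ha hb hab, norm_mul, Nat.totient_mul hab, Nat.cast_mul, mul_div_mul_comm]

lemma mem_smoothNumbers_floor_add_one_iff {z : ℝ} (hz : 0 ≤ z) (a : ℕ) :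
    a ∈ (⌊z⌋₊ + 1).smoothNumbers ↔ 1 ≤ a ∧ ∀ p : ℕ, p.Prime → p ∣ a → (p : ℝ) ≤ z := by
  rw [Nat.mem_smoothNumbers_iff_forall_le, Nat.one_le_iff_ne_zero]
  refine and_congr_right fun ha => ?_
  simp_rw [Nat.lt_succ_iff, Nat.le_floor_iff hz]
  exact ⟨fun h p hp hpa => h p (Nat.le_of_dvd (Nat.pos_of_ne_zero ha) hpa) hp hpa,
    fun h p _ hp hpa => h p hp hpa⟩

lemma filter_prime_Icc_two_eq_primesBelow (N : ℕ) :
    (Icc 2 N).filter Nat.Prime = (N + 1).primesBelow := by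
  ext p
  simp only [mem_filter, mem_Icc, Nat.mem_primesBelow, Nat.lt_succ_iff]
  exact ⟨fun ⟨⟨_, hpN⟩, hp⟩ => ⟨hpN, hp⟩, fun ⟨hpN, hp⟩ => ⟨⟨hp.two_le, hpN⟩, hp⟩⟩

theorem stmt7_general (m : ℕ) :
    ∃ C > (0 : ℝ), ∀ lam : ℕ → ℂ,
      lam 1 = 1 →
      (∀ a b : ℕ, 1 ≤ a → 1 ≤ b → Nat.Coprime a b → lam (a * b) = lam a * lam b) →
      (∀ n : ℕ, 1 ≤ n → ‖lam n‖ ≤ tauM m n) →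
      ∀ z : ℝ, 2 ≤ z →
      Summable (fun a : {a : ℕ // 1 ≤ a ∧ ∀ p : ℕ, p.Prime → p ∣ a → (p : ℝ) ≤ z} =>
        ‖lam (a : ℕ)‖ / ((a : ℕ).totient : ℝ)) ∧
      (∑' a : {a : ℕ // 1 ≤ a ∧ ∀ p : ℕ, p.Prime → p ∣ a → (p : ℝ) ≤ z},
          ‖lam (a : ℕ)‖ / ((a : ℕ).totient : ℝ))
        ≤ C * ∏ p ∈ (Finset.Icc 2 ⌊z⌋₊).filter Nat.Prime, (1 + ‖lam p‖ / p) := by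
  refine ⟨Real.exp (eulerFactorConst m * ∑' n : ℕ, 1 / (n : ℝ) ^ 2), Real.exp_pos _,
    fun lam hlam1 hmul hlam z hz => ?_⟩
  let f : ℕ → ℝ := fun n => ‖lam n‖ / n.totient
  have hlocal (p : ℕ) (hp : p.Prime) :=
    summable_and_tsum_norm_div_totient_prime_pow_le hp hlam1 hlam
  obtain ⟨hsum, hprod⟩ := EulerProduct.summable_and_hasSum_smoothNumbers_prod_primesBelow_tsum
    (f := f) (by simp [f, hlam1]) (norm_div_totient_mul_of_coprime hmul)
    (fun hp => by simpa [f] using (hlocal _ hp).1) (⌊z⌋₊ + 1)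
  let e := Equiv.subtypeEquivRight fun a =>
    (mem_smoothNumbers_floor_add_one_iff (by linarith : (0 : ℝ) ≤ z) a).symm
  refine ⟨e.summable_iff.mpr (hsum.congr fun a => Real.norm_of_nonneg (by positivity)), ?_⟩
  rw [filter_prime_Icc_two_eq_primesBelow]
  calc _ = ∑' a : (⌊z⌋₊ + 1).smoothNumbers, f a := e.tsum_eq (fun a => f a)
    _ = ∏ p ∈ (⌊z⌋₊ + 1).primesBelow, ∑' k, f (p ^ k) := hprod.tsum_eq
    _ ≤ _ := prod_le_exp_mul_prod_of_le_one_add_add (eulerFactorConst_nonneg m)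
      (fun p _ => tsum_nonneg fun k => by positivity) (fun p _ => by positivity)
      fun p hp => (hlocal p (Nat.prime_of_mem_primesBelow hp)).2

/-- For a multiplicative function `λ` bounded by `τ_m`, the sum of `|λ(a)|/φ(a)` over all
`z`-smooth positive integers `a` converges and is `≪ Π_{p ≤ z} (1 + |λ(p)|/p)`. -/
theorem stmt7 (m : ℕ) (hm : 1 ≤ m) :
    ∃ C > (0 : ℝ), ∀ lam : ℕ → ℂ,
      lam 1 = 1 →
      (∀ a b : ℕ, 1 ≤ a → 1 ≤ b → Nat.Coprime a b → lam (a * b) = lam a * lam b) →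
      (∀ n : ℕ, 1 ≤ n → ‖lam n‖ ≤ tauM m n) →
      ∀ z : ℝ, 2 ≤ z →
      Summable (fun a : {a : ℕ // 1 ≤ a ∧ ∀ p : ℕ, p.Prime → p ∣ a → (p : ℝ) ≤ z} =>
        ‖lam (a : ℕ)‖ / ((a : ℕ).totient : ℝ)) ∧
      (∑' a : {a : ℕ // 1 ≤ a ∧ ∀ p : ℕ, p.Prime → p ∣ a → (p : ℝ) ≤ z},
          ‖lam (a : ℕ)‖ / ((a : ℕ).totient : ℝ))
        ≤ C * ∏ p ∈ (Finset.Icc 2 ⌊z⌋₊).filter Nat.Prime, (1 + ‖lam p‖ / p) :=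
  stmt7_general m
end

section
/- For every integer A ≥ 0 and every real ε > 0 there is a constant C > 0 such that for all real t and all real w > 0: the improper integral I(t, w) := lim_{R → ∞} ∫₀^R (v² + 1)^{-(1/2 + it)} cos(v w) dv exists, and |I(t, w)| ≤ C · ((1 + |t|)/w)^A · (1 + (1 + |t|)/w)^ε. -/
/-!
Write `f(v) = (v² + 1)^{-s}` with `Re s = 1/2` and `S = 1 + |s|`. Differentiating the equation
`(1 + v²) f' = -2 s v f` repeatedly gives a three-term recurrence for the derivatives `f⁽ᵏ⁾`,
from which `|f⁽ᵏ⁾(v)| ≪_k S^k (1 + v²)^{-(k+1)/2}`; in particular `f⁽ᵏ⁾` is integrable for `k ≥ 1`.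

One integration by parts turns the improper cosine integral into the absolutely convergent
`-w⁻¹ ∫₀^∞ f'(v) sin(vw) dv`. Since `f'` is odd, this is half an integral over `ℝ`, i.e. a
combination of Fourier transforms of `f'` at `±w/2π`, and moving `A - 1` further derivatives onto
`f'` gives the bound `≪ (S/w)^A` when `A ≥ 1`. For `A = 0` one splits at `V = S/w`: the head is
at most `∫₀^V (1 + v²)^{-1/2} dv ≪_ε (1 + V)^ε`, and the tail, after integration by parts,
is `O(1)`.
-/

open MeasureTheory Filter Set
open scoped ContDiff Topology FourierTransform

noncomputable section

namespace BesselKIntegral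

def sqAddOneCpow (s : ℂ) (v : ℝ) : ℂ := ((v ^ 2 + 1 : ℝ) : ℂ) ^ (-s)

lemma sq_add_one_pos (v : ℝ) : 0 < v ^ 2 + 1 := by positivity

lemma sqAddOneCpow_eq_exp (s : ℂ) (v : ℝ) :
    sqAddOneCpow s v = Complex.exp (-s * Real.log (v ^ 2 + 1)) := by
  rw [sqAddOneCpow, Complex.cpow_def_of_ne_zero (by exact_mod_cast (sq_add_one_pos v).ne'),
    ← Complex.ofReal_log (sq_add_one_pos v).le, mul_comm]

lemma contDiff_sqAddOneCpow (s : ℂ) : ContDiff ℝ ∞ (sqAddOneCpow s) := by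
  have hlog : ContDiff ℝ ∞ fun v : ℝ => Real.log (v ^ 2 + 1) :=
    (contDiff_id.pow 2 |>.add contDiff_const).log fun v => (sq_add_one_pos v).ne'
  rw [funext (sqAddOneCpow_eq_exp s)]
  exact Complex.contDiff_exp.comp (contDiff_const.mul (Complex.ofRealCLM.contDiff.comp hlog))

lemma norm_sqAddOneCpow (s : ℂ) (v : ℝ) : ‖sqAddOneCpow s v‖ = (v ^ 2 + 1) ^ (-s.re) := by
  rw [sqAddOneCpow, Complex.norm_cpow_eq_rpow_re_of_pos (sq_add_one_pos v), Complex.neg_re]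

lemma sqAddOneCpow_neg (s : ℂ) (v : ℝ) : sqAddOneCpow s (-v) = sqAddOneCpow s v := by
  simp [sqAddOneCpow]

lemma hasDerivAt_sqAddOneCpow (s : ℂ) (v : ℝ) :
    HasDerivAt (sqAddOneCpow s) (-2 * s * v * sqAddOneCpow s v / (v ^ 2 + 1 : ℝ)) v := by
  have hlog : HasDerivAt (fun v : ℝ => Real.log (v ^ 2 + 1)) (2 * v / (v ^ 2 + 1)) v := by
    simpa using ((hasDerivAt_pow 2 v).add_const 1).log (sq_add_one_pos v).ne'
  rw [funext (sqAddOneCpow_eq_exp s)]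
  convert (hlog.ofReal_comp.const_mul (-s)).cexp using 1
  push_cast
  ring

lemma sq_add_one_mul_deriv_sqAddOneCpow (s : ℂ) (v : ℝ) :
    (v ^ 2 + 1 : ℝ) * deriv (sqAddOneCpow s) v = -2 * s * v * sqAddOneCpow s v := by
  rw [(hasDerivAt_sqAddOneCpow s v).deriv,
    mul_div_cancel₀ _ (Complex.ofReal_ne_zero.mpr (sq_add_one_pos v).ne')]

lemma hasDerivAt_iteratedDeriv {𝕜 F : Type*} [NontriviallyNormedField 𝕜] [NormedAddCommGroup F]
    [NormedSpace 𝕜 F] {f : 𝕜 → F} (hf : ContDiff 𝕜 ∞ f) (k : ℕ) (x : 𝕜) :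
    HasDerivAt (iteratedDeriv k f) (iteratedDeriv (k + 1) f x) x := by
  rw [iteratedDeriv_succ]
  exact (hf.differentiable_iteratedDeriv k (by exact_mod_cast WithTop.coe_lt_top _)
    ).differentiableAt.hasDerivAt

lemma sq_add_one_relation_deriv {g g' g'' r r' : ℝ → ℂ} (a : ℂ)
    (hg : ∀ v, HasDerivAt g (g' v) v) (hg' : ∀ v, HasDerivAt g' (g'' v) v)
    (hr : ∀ v, HasDerivAt r (r' v) v)
    (hrel : ∀ v, (v ^ 2 + 1 : ℝ) * g' v + a * v * g v + r v = 0) (v : ℝ) :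
    (v ^ 2 + 1 : ℝ) * g'' v + (a + 2) * v * g' v + (a * g v + r' v) = 0 := by
  have hu : HasDerivAt (fun v : ℝ => ((v ^ 2 + 1 : ℝ) : ℂ)) (2 * v) v := by
    simpa using ((hasDerivAt_pow 2 v).add_const 1).ofReal_comp
  have hav : HasDerivAt (fun v : ℝ => a * v) a v := by
    simpa using (hasDerivAt_id v).ofReal_comp.const_mul a
  have hzero : HasDerivAt (fun v => (v ^ 2 + 1 : ℝ) * g' v + a * v * g v + r v) 0 v := by
    rw [funext hrel]
    exact hasDerivAt_const v 0
  have h := hzero.unique (((hu.mul (hg' v)).add (hav.mul (hg v))).add (hr v))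
  linear_combination -h

lemma iteratedDeriv_sqAddOneCpow_recurrence (s : ℂ) (k : ℕ) (v : ℝ) :
    (v ^ 2 + 1 : ℝ) * iteratedDeriv (k + 2) (sqAddOneCpow s) v
      + (2 * s + 2 * (k + 1)) * v * iteratedDeriv (k + 1) (sqAddOneCpow s) v
      + (k + 1) * (2 * s + k) * iteratedDeriv k (sqAddOneCpow s) v = 0 := by
  have hd := hasDerivAt_iteratedDeriv (contDiff_sqAddOneCpow s)
  induction k generalizing v with
  | zero =>
    have hrel (v : ℝ) : (v ^ 2 + 1 : ℝ) * iteratedDeriv 1 (sqAddOneCpow s) v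
        + 2 * s * v * iteratedDeriv 0 (sqAddOneCpow s) v + 0 = 0 := by
      simp only [iteratedDeriv_one, iteratedDeriv_zero, sq_add_one_mul_deriv_sqAddOneCpow]
      ring
    have := sq_add_one_relation_deriv _ (hd 0) (hd 1) (fun v => hasDerivAt_const v 0) hrel v
    simp only [Nat.cast_zero] at this ⊢
    linear_combination this
  | succ k ih =>
    have := sq_add_one_relation_deriv _ (hd (k + 1)) (hd (k + 2))
      (fun v => (hd k v).const_mul ((k + 1) * (2 * s + k))) ih v
    rw [show k + 1 + 2 = k + 2 + 1 from rfl]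
    simp only [Nat.cast_add, Nat.cast_one]
    linear_combination this

/-- The constants in `norm_iteratedDeriv_sqAddOneCpow_mul_le`: the recurrence
`iteratedDeriv_sqAddOneCpow_recurrence` has coefficients of size at most `2 (k + 2) (1 + ‖s‖)`
and `(k + 1) (k + 2) (1 + ‖s‖)`. -/
def derivConst : ℕ → ℝ
  | 0 => 1
  | 1 => 2
  | k + 2 => (k + 2) * (2 * derivConst (k + 1) + (k + 1) * derivConst k)

lemma derivConst_pos : ∀ k, 0 < derivConst k
  | 0 => zero_lt_one
  | 1 => zero_lt_two
  | k + 2 => by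
    have := derivConst_pos k
    have := derivConst_pos (k + 1)
    rw [derivConst]
    positivity

lemma norm_mul_sqrt_sq_le_of_relation {X Y Z a : ℂ} {v : ℝ}
    (h : (v ^ 2 + 1 : ℝ) * X + a * v * Y + Z = 0) :
    ‖X‖ * √(v ^ 2 + 1) ^ 2 ≤ ‖a‖ * ‖Y‖ * √(v ^ 2 + 1) + ‖Z‖ := by
  rw [Real.sq_sqrt (sq_add_one_pos v).le]
  have hX : ((v ^ 2 + 1 : ℝ) : ℂ) * X = -(a * v * Y + Z) := by linear_combination h
  have := congrArg norm hX
  rw [norm_mul, Complex.norm_real, Real.norm_of_nonneg (sq_add_one_pos v).le, norm_neg] at this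
  calc ‖X‖ * (v ^ 2 + 1) = ‖a * v * Y + Z‖ := by rw [mul_comm, this]
    _ ≤ ‖a‖ * |v| * ‖Y‖ + ‖Z‖ := by
      refine (norm_add_le _ _).trans ?_
      rw [norm_mul, norm_mul, Complex.norm_real, Real.norm_eq_abs]
    _ ≤ ‖a‖ * ‖Y‖ * √(v ^ 2 + 1) + ‖Z‖ := by
      have := mul_le_mul_of_nonneg_left (Real.abs_le_sqrt (by linarith : v ^ 2 ≤ v ^ 2 + 1))
        (mul_nonneg (norm_nonneg a) (norm_nonneg Y))
      linarith

lemma norm_deriv_sqAddOneCpow_mul_le (s : ℂ) (v : ℝ) :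
    ‖deriv (sqAddOneCpow s) v‖ * √(v ^ 2 + 1) ≤ 2 * (1 + ‖s‖) * (v ^ 2 + 1) ^ (-s.re) := by
  have hrel : (v ^ 2 + 1 : ℝ) * deriv (sqAddOneCpow s) v
      + 2 * s * v * sqAddOneCpow s v + 0 = 0 := by
    rw [sq_add_one_mul_deriv_sqAddOneCpow]; ring
  have h := norm_mul_sqrt_sq_le_of_relation hrel
  rw [norm_sqAddOneCpow, norm_zero, add_zero, norm_mul, Complex.norm_ofNat, sq,
    ← mul_assoc] at h
  have := le_of_mul_le_mul_right h (Real.sqrt_pos.mpr (sq_add_one_pos v))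
  have := Real.rpow_nonneg (sq_add_one_pos v).le (-s.re)
  nlinarith

lemma norm_two_mul_add_two_mul_le (s : ℂ) (k : ℕ) :
    ‖2 * s + 2 * ((k : ℂ) + 1)‖ ≤ 2 * (k + 2) * (1 + ‖s‖) := by
  calc ‖2 * s + 2 * ((k : ℂ) + 1)‖ ≤ 2 * ‖s‖ + 2 * (k + 1) := by
        refine (norm_add_le _ _).trans ?_
        rw [norm_mul, norm_mul, Complex.norm_ofNat]
        norm_cast
    _ ≤ 2 * (k + 2) * (1 + ‖s‖) := by nlinarith [norm_nonneg s]

lemma norm_add_one_mul_two_mul_add_le (s : ℂ) (k : ℕ) :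
    ‖((k : ℂ) + 1) * (2 * s + k)‖ ≤ (k + 1) * ((k + 2) * (1 + ‖s‖)) := by
  rw [norm_mul]
  gcongr
  · norm_cast
  · calc ‖2 * s + (k : ℂ)‖ ≤ 2 * ‖s‖ + k := by
          refine (norm_add_le _ _).trans ?_
          rw [norm_mul, Complex.norm_ofNat, Complex.norm_natCast]
      _ ≤ (k + 2) * (1 + ‖s‖) := by nlinarith [norm_nonneg s]

theorem norm_iteratedDeriv_sqAddOneCpow_mul_le (s : ℂ) (k : ℕ) (v : ℝ) :
    ‖iteratedDeriv k (sqAddOneCpow s) v‖ * √(v ^ 2 + 1) ^ k ≤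
      derivConst k * (1 + ‖s‖) ^ k * (v ^ 2 + 1) ^ (-s.re) := by
  set r := √(v ^ 2 + 1)
  set S := 1 + ‖s‖
  have hS : 1 ≤ S := le_add_of_nonneg_right (norm_nonneg s)
  have hW : 0 ≤ (v ^ 2 + 1) ^ (-s.re) := Real.rpow_nonneg (sq_add_one_pos v).le _
  let P (k : ℕ) : Prop := ‖iteratedDeriv k (sqAddOneCpow s) v‖ * r ^ k ≤
      derivConst k * S ^ k * (v ^ 2 + 1) ^ (-s.re)
  suffices ∀ k, P k ∧ P (k + 1) from (this k).1
  intro k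
  induction k with
  | zero =>
    refine ⟨by simp [P, derivConst, norm_sqAddOneCpow], ?_⟩
    simpa [P, derivConst] using norm_deriv_sqAddOneCpow_mul_le s v
  | succ k ih =>
    obtain ⟨hk, hk1⟩ := ih
    refine ⟨hk1, ?_⟩
    have h := norm_mul_sqrt_sq_le_of_relation (iteratedDeriv_sqAddOneCpow_recurrence s k v)
    rw [norm_mul] at h
    have hc := derivConst_pos k
    have hSk := mul_le_mul_of_nonneg_left (pow_le_pow_right₀ hS (by omega : k + 1 ≤ k + 2))
      (by positivity : 0 ≤ (k + 1) * (k + 2) * derivConst k * (v ^ 2 + 1) ^ (-s.re))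
    calc ‖iteratedDeriv (k + 2) (sqAddOneCpow s) v‖ * r ^ (k + 2)
        = ‖iteratedDeriv (k + 2) (sqAddOneCpow s) v‖ * r ^ 2 * r ^ k := by ring
      _ ≤ (‖2 * s + 2 * ((k : ℂ) + 1)‖ * ‖iteratedDeriv (k + 1) (sqAddOneCpow s) v‖ * r
          + ‖((k : ℂ) + 1) * (2 * s + k)‖ * ‖iteratedDeriv k (sqAddOneCpow s) v‖) * r ^ k := by
        gcongr
      _ = ‖2 * s + 2 * ((k : ℂ) + 1)‖ * (‖iteratedDeriv (k + 1) (sqAddOneCpow s) v‖ * r ^ (k + 1))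
          + ‖((k : ℂ) + 1) * (2 * s + k)‖ * (‖iteratedDeriv k (sqAddOneCpow s) v‖ * r ^ k) := by
        ring
      _ ≤ 2 * (k + 2) * S * (derivConst (k + 1) * S ^ (k + 1) * (v ^ 2 + 1) ^ (-s.re))
          + (k + 1) * ((k + 2) * S) * (derivConst k * S ^ k * (v ^ 2 + 1) ^ (-s.re)) := by
        gcongr
        exacts [norm_two_mul_add_two_mul_le s k, norm_add_one_mul_two_mul_add_le s k]
      _ ≤ derivConst (k + 2) * S ^ (k + 2) * (v ^ 2 + 1) ^ (-s.re) := by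
        rw [derivConst]
        linear_combination hSk

lemma norm_iteratedDeriv_sqAddOneCpow_le {s : ℂ} (hs : s.re = 1 / 2) {k : ℕ} (hk : 1 ≤ k)
    (v : ℝ) :
    ‖iteratedDeriv k (sqAddOneCpow s) v‖ ≤ derivConst k * (1 + ‖s‖) ^ k * (1 + v ^ 2)⁻¹ := by
  have hr1 : 1 ≤ √(v ^ 2 + 1) := Real.one_le_sqrt.mpr (by nlinarith)
  have hpow : √(v ^ 2 + 1) ^ 2 ≤ √(v ^ 2 + 1) ^ (k + 1) := pow_le_pow_right₀ hr1 (by omega)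
  have h := norm_iteratedDeriv_sqAddOneCpow_mul_le s k v
  rw [hs, Real.rpow_neg (sq_add_one_pos v).le, ← Real.sqrt_eq_rpow] at h
  rw [Real.sq_sqrt (sq_add_one_pos v).le] at hpow
  have hC : 0 ≤ derivConst k * (1 + ‖s‖) ^ k := by
    have := derivConst_pos k; positivity
  rw [add_comm 1 (v ^ 2), ← div_eq_mul_inv, le_div_iff₀ (sq_add_one_pos v)]
  calc ‖iteratedDeriv k (sqAddOneCpow s) v‖ * (v ^ 2 + 1)
      ≤ ‖iteratedDeriv k (sqAddOneCpow s) v‖ * √(v ^ 2 + 1) ^ (k + 1) := by gcongr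
    _ = ‖iteratedDeriv k (sqAddOneCpow s) v‖ * √(v ^ 2 + 1) ^ k * √(v ^ 2 + 1) := by ring
    _ ≤ derivConst k * (1 + ‖s‖) ^ k * (√(v ^ 2 + 1))⁻¹ * √(v ^ 2 + 1) := by gcongr
    _ = derivConst k * (1 + ‖s‖) ^ k := by
      rw [mul_assoc, inv_mul_cancel₀ (by positivity), mul_one]

lemma continuous_iteratedDeriv_sqAddOneCpow (s : ℂ) (k : ℕ) :
    Continuous (iteratedDeriv k (sqAddOneCpow s)) :=
  (contDiff_sqAddOneCpow s).continuous_iteratedDeriv k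
    (by exact_mod_cast WithTop.coe_le_coe.mpr le_top)

lemma integrable_iteratedDeriv_sqAddOneCpow {s : ℂ} (hs : s.re = 1 / 2) {k : ℕ} (hk : 1 ≤ k) :
    Integrable (iteratedDeriv k (sqAddOneCpow s)) :=
  (integrable_inv_one_add_sq.const_mul _).mono'
    (continuous_iteratedDeriv_sqAddOneCpow s k).aestronglyMeasurable
    (.of_forall (norm_iteratedDeriv_sqAddOneCpow_le hs hk))

lemma integral_norm_iteratedDeriv_sqAddOneCpow_le {s : ℂ} (hs : s.re = 1 / 2) {k : ℕ}
    (hk : 1 ≤ k) :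
    ∫ v, ‖iteratedDeriv k (sqAddOneCpow s) v‖ ≤ derivConst k * (1 + ‖s‖) ^ k * Real.pi := by
  rw [← integral_univ_inv_one_add_sq, ← integral_const_mul]
  exact integral_mono (integrable_iteratedDeriv_sqAddOneCpow hs hk).norm
    (integrable_inv_one_add_sq.const_mul _) (norm_iteratedDeriv_sqAddOneCpow_le hs hk)

theorem tendsto_integral_mul_deriv_of_integrableOn_Ioi {A : Type*} [NormedRing A]
    [NormedAlgebra ℝ A] [CompleteSpace A] {u u' φ φ' : ℝ → A} (a : ℝ)
    (hu : ∀ x, HasDerivAt u (u' x) x) (hφ : ∀ x, HasDerivAt φ (φ' x) x)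
    (hu' : Continuous u') (hφ' : Continuous φ') (h_top : Tendsto (u * φ) atTop (𝓝 0))
    (h_int : IntegrableOn (u' * φ) (Ioi a)) :
    Tendsto (fun R => ∫ x in a..R, u x * φ' x) atTop
      (𝓝 (-(u a * φ a) - ∫ x in Ioi a, u' x * φ x)) := by
  have h := (h_top.sub_const (u a * φ a)).sub
    (intervalIntegral_tendsto_integral_Ioi a h_int tendsto_id)
  rw [zero_sub] at h
  refine h.congr fun R => ?_
  exact (intervalIntegral.integral_mul_deriv_eq_deriv_mul (fun x _ => hu x) (fun x _ => hφ x)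
    (hu'.intervalIntegrable a R) (hφ'.intervalIntegrable a R)).symm

lemma hasDerivAt_sin_mul_div {w : ℝ} (hw : w ≠ 0) (v : ℝ) :
    HasDerivAt (fun v : ℝ => ((Real.sin (v * w) / w : ℝ) : ℂ)) (Real.cos (v * w) : ℂ) v := by
  have h := ((Real.hasDerivAt_sin (v * w)).comp v (hasDerivAt_mul_const w)).div_const w
  rw [mul_div_cancel_right₀ _ hw] at h
  exact h.ofReal_comp

lemma norm_sin_mul_div_le {w : ℝ} (hw : 0 < w) (v : ℝ) :
    ‖((Real.sin (v * w) / w : ℝ) : ℂ)‖ ≤ w⁻¹ := by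
  rw [Complex.norm_real, norm_div, Real.norm_of_nonneg hw.le, div_eq_mul_inv]
  exact mul_le_of_le_one_left (inv_nonneg.mpr hw.le) (Real.abs_sin_le_one _)

lemma integrable_deriv_sqAddOneCpow_mul_sin {s : ℂ} (hs : s.re = 1 / 2) {w : ℝ} (hw : 0 < w) :
    Integrable fun v => deriv (sqAddOneCpow s) v * ((Real.sin (v * w) / w : ℝ) : ℂ) := by
  refine Integrable.mul_bdd ?_ (by fun_prop) (.of_forall (norm_sin_mul_div_le hw))
  simpa using integrable_iteratedDeriv_sqAddOneCpow hs le_rfl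

lemma tendsto_sqAddOneCpow_atTop {s : ℂ} (hs : s.re = 1 / 2) :
    Tendsto (sqAddOneCpow s) atTop (𝓝 0) := by
  rw [tendsto_zero_iff_norm_tendsto_zero]
  simp only [norm_sqAddOneCpow, hs]
  exact (tendsto_rpow_neg_atTop one_half_pos).comp
    (tendsto_atTop_add_const_right _ 1 (tendsto_pow_atTop two_ne_zero))

theorem tendsto_integral_sqAddOneCpow_mul_cos {s : ℂ} (hs : s.re = 1 / 2) {w : ℝ} (hw : 0 < w)
    (a : ℝ) :
    Tendsto (fun R => ∫ v in a..R, sqAddOneCpow s v * (Real.cos (v * w) : ℂ)) atTop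
      (𝓝 (-(sqAddOneCpow s a * ((Real.sin (a * w) / w : ℝ) : ℂ))
        - ∫ v in Ioi a, deriv (sqAddOneCpow s) v * ((Real.sin (v * w) / w : ℝ) : ℂ))) := by
  refine tendsto_integral_mul_deriv_of_integrableOn_Ioi a
    (fun v => ((hasDerivAt_sqAddOneCpow s v).differentiableAt).hasDerivAt)
    (hasDerivAt_sin_mul_div hw.ne') ?_ (by fun_prop) ?_
    (integrable_deriv_sqAddOneCpow_mul_sin hs hw).integrableOn
  · simpa using continuous_iteratedDeriv_sqAddOneCpow s 1
  · refine squeeze_zero_norm (fun v => ?_)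
      (by simpa using (tendsto_sqAddOneCpow_atTop hs).norm.mul_const w⁻¹)
    rw [Pi.mul_apply, norm_mul]
    exact mul_le_mul_of_nonneg_left (norm_sin_mul_div_le hw v) (norm_nonneg _)

/-- The value of `∫₀^∞ (v² + 1)^{-s} cos(vw) dv`, after one integration by parts. -/
def cosIntegral (s : ℂ) (w : ℝ) : ℂ :=
  -∫ v in Ioi 0, deriv (sqAddOneCpow s) v * ((Real.sin (v * w) / w : ℝ) : ℂ)

theorem tendsto_integral_sqAddOneCpow_mul_cos_cosIntegral {s : ℂ} (hs : s.re = 1 / 2) {w : ℝ}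
    (hw : 0 < w) :
    Tendsto (fun R => ∫ v in (0 : ℝ)..R, sqAddOneCpow s v * (Real.cos (v * w) : ℂ)) atTop
      (𝓝 (cosIntegral s w)) := by
  simpa [cosIntegral] using tendsto_integral_sqAddOneCpow_mul_cos hs hw 0

lemma integral_Ioi_eq_half_integral_of_even {E : Type*} [NormedAddCommGroup E]
    [NormedSpace ℝ E] {g : ℝ → E} (hg : Integrable g) (heven : ∀ x, g (-x) = g x) :
    ∫ x in Ioi 0, g x = (1 / 2 : ℝ) • ∫ x, g x := by
  rw [← intervalIntegral.integral_Iic_add_Ioi hg.integrableOn hg.integrableOn, ← neg_zero,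
    ← integral_comp_neg_Ioi, neg_zero]
  simp only [heven]
  rw [← two_smul ℝ, smul_smul]
  norm_num

lemma deriv_neg_of_even {f : ℝ → ℂ} (heven : ∀ x, f (-x) = f x) (x : ℝ) :
    deriv f (-x) = -deriv f x := by
  have := deriv_comp_neg (f := f) (x := x)
  rw [funext heven] at this
  rw [this, neg_neg]

lemma integral_mul_sin_eq_fourier {g : ℝ → ℂ} (hg : Integrable g) (w : ℝ) :
    ∫ v, g v * (Real.sin (v * w) : ℂ) =
      Complex.I / 2 * (𝓕 g (w / (2 * Real.pi)) - 𝓕 g (-w / (2 * Real.pi))) := by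
  have hexp (c : ℝ) : Integrable fun v : ℝ => Complex.exp (↑(c * v * w) * Complex.I) • g v :=
    hg.bdd_smul 1 (by fun_prop : Continuous fun v : ℝ =>
      Complex.exp (↑(c * v * w) * Complex.I)).aestronglyMeasurable
      (.of_forall fun v => by rw [Complex.norm_exp_ofReal_mul_I])
  have h2π : (2 * Real.pi : ℂ) ≠ 0 := by exact_mod_cast Real.two_pi_pos.ne'
  rw [Real.fourier_real_eq_integral_exp_smul, Real.fourier_real_eq_integral_exp_smul,
    ← integral_sub, ← integral_const_mul]
  · congr 1 with v
    rw [Complex.ofReal_sin, Complex.sin, smul_eq_mul, smul_eq_mul]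
    push_cast
    field_simp
  · convert hexp (-1) using 3; push_cast; field_simp
  · convert hexp 1 using 3; push_cast; field_simp

lemma norm_fourier_deriv_sqAddOneCpow_mul_le {s : ℂ} (hs : s.re = 1 / 2) (n : ℕ) (ξ : ℝ) :
    ‖𝓕 (deriv (sqAddOneCpow s)) ξ‖ * |2 * Real.pi * ξ| ^ n ≤
      derivConst (n + 1) * (1 + ‖s‖) ^ (n + 1) * Real.pi := by
  have hF := congrFun (Real.fourier_iteratedDeriv (N := ⊤) (n := n)
    (contDiff_infty_iff_deriv.1 (contDiff_sqAddOneCpow s)).2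
    (fun k _ => by
      rw [← iteratedDeriv_succ']
      exact integrable_iteratedDeriv_sqAddOneCpow hs (by omega)) le_top) ξ
  rw [← iteratedDeriv_succ'] at hF
  calc ‖𝓕 (deriv (sqAddOneCpow s)) ξ‖ * |2 * Real.pi * ξ| ^ n
      = ‖𝓕 (iteratedDeriv (n + 1) (sqAddOneCpow s)) ξ‖ := by
        rw [hF, norm_smul, norm_pow, mul_comm]
        simp [abs_mul]
    _ ≤ ∫ v, ‖iteratedDeriv (n + 1) (sqAddOneCpow s) v‖ :=
        VectorFourier.norm_fourierIntegral_le_integral_norm _ _ _ _ _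
    _ ≤ _ := integral_norm_iteratedDeriv_sqAddOneCpow_le hs (by omega)

theorem norm_cosIntegral_le_div_pow {s : ℂ} (hs : s.re = 1 / 2) {w : ℝ} (hw : 0 < w) (n : ℕ) :
    ‖cosIntegral s w‖ ≤ derivConst (n + 1) * (1 + ‖s‖) ^ (n + 1) * Real.pi / 2 / w ^ (n + 1) := by
  set M := derivConst (n + 1) * (1 + ‖s‖) ^ (n + 1) * Real.pi
  set F := 𝓕 (deriv (sqAddOneCpow s))
  have hF (ξ : ℝ) (hξ : |2 * Real.pi * ξ| = w) : ‖F ξ‖ ≤ M / w ^ n := by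
    rw [le_div_iff₀ (by positivity), ← hξ]
    exact norm_fourier_deriv_sqAddOneCpow_mul_le hs n ξ
  have hξ : |2 * Real.pi * (w / (2 * Real.pi))| = w := by
    rw [mul_div_cancel₀ _ Real.two_pi_pos.ne', abs_of_pos hw]
  have hξ' : |2 * Real.pi * (-w / (2 * Real.pi))| = w := by
    rw [mul_div_cancel₀ _ Real.two_pi_pos.ne', abs_neg, abs_of_pos hw]
  have heven (v : ℝ) : deriv (sqAddOneCpow s) (-v) * ((Real.sin (-v * w) / w : ℝ) : ℂ)
      = deriv (sqAddOneCpow s) v * ((Real.sin (v * w) / w : ℝ) : ℂ) := by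
    rw [deriv_neg_of_even (sqAddOneCpow_neg s), neg_mul v, Real.sin_neg]
    push_cast
    ring
  have hdiv : ∫ v, deriv (sqAddOneCpow s) v * ((Real.sin (v * w) / w : ℝ) : ℂ)
      = (∫ v, deriv (sqAddOneCpow s) v * (Real.sin (v * w) : ℂ)) / w := by
    rw [← integral_div]
    push_cast
    simp only [mul_div_assoc]
  rw [cosIntegral, integral_Ioi_eq_half_integral_of_even
    (integrable_deriv_sqAddOneCpow_mul_sin hs hw) heven, hdiv,
    integral_mul_sin_eq_fourier (by simpa using integrable_iteratedDeriv_sqAddOneCpow hs le_rfl)]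
  calc ‖-((1 / 2 : ℝ) • (Complex.I / 2 * (F (w / (2 * Real.pi)) - F (-w / (2 * Real.pi))) / w))‖
      = ‖F (w / (2 * Real.pi)) - F (-w / (2 * Real.pi))‖ / (4 * w) := by
        simp only [one_div, Complex.real_smul, Complex.ofReal_inv, Complex.ofReal_ofNat, norm_neg,
          Complex.norm_mul, norm_inv, Complex.norm_ofNat, Complex.norm_div, Complex.norm_I,
          Complex.norm_real, Real.norm_eq_abs, abs_of_pos hw]
        ring
    _ ≤ (M / w ^ n + M / w ^ n) / (4 * w) := by
        gcongr
        exact (norm_sub_le _ _).trans (add_le_add (hF _ hξ) (hF _ hξ'))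
    _ = M / 2 / w ^ (n + 1) := by
        field_simp
        ring

lemma cosIntegral_eq_add {s : ℂ} (hs : s.re = 1 / 2) {w : ℝ} (hw : 0 < w) (V : ℝ) :
    cosIntegral s w = (∫ v in (0 : ℝ)..V, sqAddOneCpow s v * (Real.cos (v * w) : ℂ))
      - sqAddOneCpow s V * ((Real.sin (V * w) / w : ℝ) : ℂ)
      - ∫ v in Ioi V, deriv (sqAddOneCpow s) v * ((Real.sin (v * w) / w : ℝ) : ℂ) := by
  have hcont : Continuous fun v : ℝ => sqAddOneCpow s v * (Real.cos (v * w) : ℂ) :=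
    (contDiff_sqAddOneCpow s).continuous.mul (by fun_prop)
  have h := (tendsto_integral_sqAddOneCpow_mul_cos hs hw V).const_add
    (∫ v in (0 : ℝ)..V, sqAddOneCpow s v * (Real.cos (v * w) : ℂ))
  rw [tendsto_nhds_unique (tendsto_integral_sqAddOneCpow_mul_cos_cosIntegral hs hw)
    (h.congr fun R => intervalIntegral.integral_add_adjacent_intervals
      (hcont.intervalIntegrable 0 V) (hcont.intervalIntegrable V R))]
  ring

lemma sq_add_one_rpow_neg_half_le {v ε : ℝ} (hv : 0 ≤ v) (hε : 0 < ε) :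
    (v ^ 2 + 1) ^ (-(1 / 2 : ℝ)) ≤ √2 * (1 + v) ^ (ε - 1) := by
  rw [Real.rpow_neg (sq_add_one_pos v).le, ← Real.sqrt_eq_rpow, Real.rpow_sub_one (by positivity),
    ← mul_div_assoc, le_div_iff₀ (by positivity)]
  calc (√(v ^ 2 + 1))⁻¹ * (1 + v) ≤ (√(v ^ 2 + 1))⁻¹ * (√2 * √(v ^ 2 + 1)) := by
        gcongr
        rw [← Real.sqrt_mul zero_le_two]
        exact Real.le_sqrt_of_sq_le (by nlinarith [sq_nonneg (v - 1)])
    _ = √2 := by field_simp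
    _ ≤ √2 * (1 + v) ^ ε := le_mul_of_one_le_right (by positivity)
        (Real.one_le_rpow (by linarith) hε.le)

lemma sq_add_one_rpow_neg_half_le_inv {v : ℝ} (hv : 0 < v) :
    (v ^ 2 + 1) ^ (-(1 / 2 : ℝ)) ≤ v⁻¹ := by
  rw [Real.rpow_neg (sq_add_one_pos v).le, ← Real.sqrt_eq_rpow]
  exact inv_anti₀ hv (Real.le_sqrt_of_sq_le (by linarith))

lemma norm_integral_sqAddOneCpow_mul_cos_le {s : ℂ} (hs : s.re = 1 / 2) (w : ℝ) {V ε : ℝ}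
    (hV : 0 ≤ V) (hε : 0 < ε) :
    ‖∫ v in (0 : ℝ)..V, sqAddOneCpow s v * (Real.cos (v * w) : ℂ)‖ ≤ √2 * (1 + V) ^ ε / ε := by
  have hint : ∫ v in (0 : ℝ)..V, (1 + v) ^ (ε - 1) = ((1 + V) ^ ε - 1) / ε := by
    rw [intervalIntegral.integral_comp_add_left (fun x => x ^ (ε - 1)),
      integral_rpow (Or.inl (by linarith))]
    simp
  have hcont : ContinuousOn (fun v : ℝ => √2 * (1 + v) ^ (ε - 1)) (uIcc 0 V) := by
    refine continuousOn_const.mul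
      ((by fun_prop : Continuous fun v : ℝ => 1 + v).continuousOn.rpow_const fun v hv => ?_)
    rw [uIcc_of_le hV] at hv
    exact Or.inl (by linarith [hv.1])
  calc ‖∫ v in (0 : ℝ)..V, sqAddOneCpow s v * (Real.cos (v * w) : ℂ)‖
      ≤ ∫ v in (0 : ℝ)..V, √2 * (1 + v) ^ (ε - 1) := by
        refine intervalIntegral.norm_integral_le_of_norm_le hV (.of_forall fun v hv => ?_)
          hcont.intervalIntegrable
        rw [norm_mul, norm_sqAddOneCpow, hs, Complex.norm_real]
        exact mul_le_of_le_one_right (by positivity) (Real.abs_cos_le_one _) |>.trans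
          (sq_add_one_rpow_neg_half_le hv.1.le hε)
    _ = √2 * ((1 + V) ^ ε - 1) / ε := by
        rw [intervalIntegral.integral_const_mul, hint, mul_div_assoc]
    _ ≤ √2 * (1 + V) ^ ε / ε := by gcongr; linarith

lemma norm_integral_Ioi_deriv_sqAddOneCpow_mul_sin_le {s : ℂ} (hs : s.re = 1 / 2) {w : ℝ}
    (hw : 0 < w) {V : ℝ} (hV : 0 < V) :
    ‖∫ v in Ioi V, deriv (sqAddOneCpow s) v * ((Real.sin (v * w) / w : ℝ) : ℂ)‖ ≤
      2 * (1 + ‖s‖) / (w * V) := by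
  have hpt (v : ℝ) (hv : v ∈ Ioi V) :
      ‖deriv (sqAddOneCpow s) v * ((Real.sin (v * w) / w : ℝ) : ℂ)‖
        ≤ 2 * (1 + ‖s‖) / w * v ^ (-2 : ℝ) := by
    have hv0 : 0 < v := hV.trans hv
    have h1 := norm_iteratedDeriv_sqAddOneCpow_le hs le_rfl v
    rw [iteratedDeriv_one, pow_one, show derivConst 1 = 2 from rfl] at h1
    have hinv : (1 + v ^ 2)⁻¹ ≤ v ^ (-2 : ℝ) := by
      rw [Real.rpow_neg hv0.le, Real.rpow_two]
      exact inv_anti₀ (by positivity) (by linarith)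
    rw [norm_mul]
    calc ‖deriv (sqAddOneCpow s) v‖ * ‖((Real.sin (v * w) / w : ℝ) : ℂ)‖
        ≤ 2 * (1 + ‖s‖) * v ^ (-2 : ℝ) * w⁻¹ := by
          gcongr
          · exact h1.trans (by gcongr)
          · exact norm_sin_mul_div_le hw v
      _ = 2 * (1 + ‖s‖) / w * v ^ (-2 : ℝ) := by ring
  calc _ ≤ ∫ v in Ioi V, 2 * (1 + ‖s‖) / w * v ^ (-2 : ℝ) :=
        norm_integral_le_of_norm_le ((integrableOn_Ioi_rpow_of_lt (by norm_num) hV).const_mul _)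
          (ae_restrict_of_forall_mem measurableSet_Ioi hpt)
    _ = 2 * (1 + ‖s‖) / (w * V) := by
        rw [integral_const_mul, integral_Ioi_rpow_of_lt (by norm_num) hV,
          show (-2 : ℝ) + 1 = -1 by norm_num, Real.rpow_neg_one]
        field_simp

theorem norm_cosIntegral_le_mul_rpow {s : ℂ} (hs : s.re = 1 / 2) {w : ℝ} (hw : 0 < w) {ε : ℝ}
    (hε : 0 < ε) : ‖cosIntegral s w‖ ≤ (√2 / ε + 3) * (1 + (1 + ‖s‖) / w) ^ ε := by
  set V := (1 + ‖s‖) / w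
  have hS : 1 ≤ 1 + ‖s‖ := le_add_of_nonneg_right (norm_nonneg s)
  have hV : 0 < V := by positivity
  have hwV : w * V = 1 + ‖s‖ := mul_div_cancel₀ _ hw.ne'
  have hhead := norm_integral_sqAddOneCpow_mul_cos_le hs w hV.le hε
  have hboundary : ‖sqAddOneCpow s V * ((Real.sin (V * w) / w : ℝ) : ℂ)‖ ≤ 1 := by
    rw [norm_mul, norm_sqAddOneCpow, hs]
    calc _ ≤ V⁻¹ * w⁻¹ := by
          gcongr
          · exact sq_add_one_rpow_neg_half_le_inv hV
          · exact norm_sin_mul_div_le hw V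
      _ = (1 + ‖s‖)⁻¹ := by rw [← mul_inv, mul_comm, hwV]
      _ ≤ 1 := inv_le_one_of_one_le₀ hS
  have htail := norm_integral_Ioi_deriv_sqAddOneCpow_mul_sin_le hs hw hV
  rw [hwV, mul_div_cancel_right₀ 2 (by positivity)] at htail
  have hone : 1 ≤ (1 + V) ^ ε := Real.one_le_rpow (by linarith) hε.le
  rw [cosIntegral_eq_add hs hw V]
  calc _ ≤ √2 * (1 + V) ^ ε / ε + 1 + 2 := (norm_sub_le _ _).trans
        (add_le_add ((norm_sub_le _ _).trans (add_le_add hhead hboundary)) htail)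
    _ = √2 / ε * (1 + V) ^ ε + 3 := by ring
    _ ≤ √2 / ε * (1 + V) ^ ε + 3 * (1 + V) ^ ε := by linarith
    _ = (√2 / ε + 3) * (1 + V) ^ ε := by ring

theorem exists_norm_cosIntegral_le (A : ℕ) {ε : ℝ} (hε : 0 < ε) :
    ∃ K > 0, ∀ s : ℂ, s.re = 1 / 2 → ∀ w : ℝ, 0 < w →
      ‖cosIntegral s w‖ ≤ K * ((1 + ‖s‖) / w) ^ A * (1 + (1 + ‖s‖) / w) ^ ε := by
  cases A with
  | zero =>
    refine ⟨√2 / ε + 3, by positivity, fun s hs w hw => ?_⟩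
    simpa using norm_cosIntegral_le_mul_rpow hs hw hε
  | succ n =>
    refine ⟨derivConst (n + 1) * Real.pi / 2,
      div_pos (mul_pos (derivConst_pos _) Real.pi_pos) two_pos, fun s hs w hw => ?_⟩
    have hone : 1 ≤ (1 + (1 + ‖s‖) / w) ^ ε :=
      Real.one_le_rpow (le_add_of_nonneg_right (by positivity)) hε.le
    calc ‖cosIntegral s w‖
        ≤ derivConst (n + 1) * (1 + ‖s‖) ^ (n + 1) * Real.pi / 2 / w ^ (n + 1) :=
          norm_cosIntegral_le_div_pow hs hw n
      _ = derivConst (n + 1) * Real.pi / 2 * ((1 + ‖s‖) / w) ^ (n + 1) := by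
          rw [div_pow]; ring
      _ ≤ _ := le_mul_of_one_le_right (by have := derivConst_pos (n + 1); positivity) hone

end BesselKIntegral

end

open Complex in
/-- The oscillatory integral `I(t,w) = ∫₀^∞ (v² + 1)^{-(1/2 + it)} cos(vw) dv` exists as an
improper Riemann-type limit and satisfies
`|I(t,w)| ≪_{A,ε} ((1 + |t|)/w)^A (1 + (1 + |t|)/w)^ε` for every integer `A ≥ 0` and
every `ε > 0`. -/
theorem stmt9 (A : ℕ) (ε : ℝ) (hε : 0 < ε) :
    ∃ C > (0 : ℝ), ∀ t : ℝ, ∀ w : ℝ, 0 < w →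
      ∃ Iint : ℂ,
        Filter.Tendsto (fun R : ℝ => ∫ v in (0 : ℝ)..R,
            ((v ^ 2 + 1 : ℝ) : ℂ) ^ (-(1 / 2 + I * t)) * (Real.cos (v * w) : ℂ))
          Filter.atTop (nhds Iint) ∧
        ‖Iint‖ ≤ C * ((1 + |t|) / w) ^ A * (1 + (1 + |t|) / w) ^ ε := by
  obtain ⟨K, hK, hbound⟩ := BesselKIntegral.exists_norm_cosIntegral_le A hε
  refine ⟨K * 2 ^ A * 2 ^ ε, by positivity, fun t w hw => ?_⟩
  have hs : (1 / 2 + I * t).re = 1 / 2 := by simp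
  have hnorm : 1 + ‖1 / 2 + I * t‖ ≤ 2 * (1 + |t|) := by
    have := norm_add_le (1 / 2 : ℂ) (I * t)
    simp only [norm_mul, norm_I, one_mul, norm_real, Real.norm_eq_abs] at this
    norm_num at this
    linarith [abs_nonneg t]
  refine ⟨BesselKIntegral.cosIntegral (1 / 2 + I * t) w,
    BesselKIntegral.tendsto_integral_sqAddOneCpow_mul_cos_cosIntegral hs hw, ?_⟩
  calc _ ≤ K * ((1 + ‖1 / 2 + I * t‖) / w) ^ A * (1 + (1 + ‖1 / 2 + I * t‖) / w) ^ ε :=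
        hbound _ hs w hw
    _ ≤ K * (2 * ((1 + |t|) / w)) ^ A * (2 * (1 + (1 + |t|) / w)) ^ ε := by
        gcongr
        · rw [mul_div_assoc']; gcongr
        · rw [mul_add, mul_one, ← mul_div_assoc]
          linarith [div_le_div_of_nonneg_right hnorm hw.le]
    _ = K * 2 ^ A * 2 ^ ε * ((1 + |t|) / w) ^ A * (1 + (1 + |t|) / w) ^ ε := by
        rw [mul_pow, Real.mul_rpow (by norm_num) (by positivity)]
        ring
end

section
/- For all reals 0 < a ≤ b there is a constant C > 0 (depending only on a and b) such that for every integer k ≥ 3 and every complex s with a ≤ Re(s) ≤ b: |Γ(s + k - 1)/Γ(k - 1) - (k - 1)^s| ≤ C · (1 + |s|)² · k^{-1} · |(k - 1)^s|; equivalently, Γ(s + k - 1)/Γ(k - 1) = (k - 1)^s (1 + O_{a,b}((|s| + 1)² k^{-1})) uniformly in the strip. -/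
/-!
Euler's integral gives
`Γ(s + n) - n ^ s Γ(n) = ∫₀^∞ e^{-t} t^{n-1} (t^s - n^s - s n^{s-1} (t - n)) dt`,
because the linear Taylor term integrates to `Γ(n + 1) - n Γ(n) = 0`. The Taylor remainder is
at most `|s| |s - 1| (t - n)² (t^{σ-2} + n^{σ-2})` with `σ = Re s`, and the second moments
`∫₀^∞ e^{-t} t^{μ-1} (t - n)² dt = Γ(μ) ((μ - n)² + μ)` bound the integral by a constant times
`|s|² Γ(n) n^{σ-1}`, once log-convexity of `Γ` gives `Γ(n + σ) ≪ Γ(n) n^σ`. Take `n = k - 1`.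
-/

open Set Real MeasureTheory

theorem norm_image_sub_sub_smul_deriv_le {E : Type*} [NormedAddCommGroup E] [NormedSpace ℝ E]
    {f f' f'' : ℝ → E} {x y M : ℝ}
    (hf : ∀ u ∈ uIcc x y, HasDerivWithinAt f (f' u) (uIcc x y) u)
    (hf' : ∀ u ∈ uIcc x y, HasDerivWithinAt f' (f'' u) (uIcc x y) u)
    (hM : ∀ u ∈ uIcc x y, ‖f'' u‖ ≤ M) :
    ‖f y - f x - (y - x) • f' x‖ ≤ M * (y - x) ^ 2 := by
  have hf'_lip : ∀ u ∈ uIcc x y, ‖f' u - f' x‖ ≤ M * |y - x| := fun u hu =>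
    (Convex.norm_image_sub_le_of_norm_hasDerivWithin_le hf' hM (convex_uIcc x y) left_mem_uIcc
      hu).trans (mul_le_mul_of_nonneg_left (abs_sub_left_of_mem_uIcc hu)
        ((norm_nonneg _).trans (hM x left_mem_uIcc)))
  have hg : ∀ u ∈ uIcc x y,
      HasDerivWithinAt (fun v => f v - (v - x) • f' x) (f' u - f' x) (uIcc x y) u :=
    fun u hu => by
      simpa using (hf u hu).fun_sub (((hasDerivWithinAt_id u _).sub_const x).smul_const (f' x))
  have := Convex.norm_image_sub_le_of_norm_hasDerivWithin_le hg hf'_lip (convex_uIcc x y)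
    left_mem_uIcc right_mem_uIcc
  simpa [mul_assoc, ← sq, Real.norm_eq_abs, sub_right_comm] using this

theorem Real.rpow_le_rpow_add_rpow_of_mem_uIcc {x y u : ℝ} (p : ℝ) (hx : 0 < x) (hy : 0 < y)
    (hu : u ∈ uIcc x y) : u ^ p ≤ x ^ p + y ^ p := by
  have hu₀ : 0 < u := lt_of_lt_of_le (lt_min hx hy) hu.1
  have hx₀ := rpow_nonneg hx.le p
  have hy₀ := rpow_nonneg hy.le p
  rcases le_total 0 p with hp | hp
  · have := rpow_le_rpow hu₀.le hu.2 hp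
    rw [max_def] at this; split_ifs at this <;> linarith
  · have := rpow_le_rpow_of_nonpos (lt_min hx hy) hu.1 hp
    rw [min_def] at this; split_ifs at this <;> linarith

theorem norm_ofReal_cpow_sub_sub_mul_le (s : ℂ) {x y : ℝ} (hx : 0 < x) (hy : 0 < y) :
    ‖(y : ℂ) ^ s - (x : ℂ) ^ s - s * (x : ℂ) ^ (s - 1) * ((y : ℂ) - x)‖
      ≤ ‖s‖ * ‖s - 1‖ * (x ^ (s.re - 2) + y ^ (s.re - 2)) * (y - x) ^ 2 := by
  have hpos : ∀ u ∈ uIcc x y, 0 < u := fun u hu => lt_of_lt_of_le (lt_min hx hy) hu.1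
  have hderiv : ∀ r : ℂ, ∀ u ∈ uIcc x y,
      HasDerivWithinAt (fun v : ℝ => (v : ℂ) ^ r) (r * (u : ℂ) ^ (r - 1)) (uIcc x y) u := by
    intro r u hu
    rcases eq_or_ne r 0 with rfl | hr
    · simpa using hasDerivWithinAt_const u _ (1 : ℂ)
    · exact (hasDerivAt_ofReal_cpow_const (hpos u hu).ne' hr).hasDerivWithinAt
  have hderiv' : ∀ u ∈ uIcc x y, HasDerivWithinAt (fun v : ℝ => s * (v : ℂ) ^ (s - 1))
      (s * (s - 1) * (u : ℂ) ^ (s - 2)) (uIcc x y) u := fun u hu => by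
    simpa [mul_assoc, sub_sub, one_add_one_eq_two] using (hderiv (s - 1) u hu).const_mul s
  have hbound : ∀ u ∈ uIcc x y, ‖s * (s - 1) * (u : ℂ) ^ (s - 2)‖
      ≤ ‖s‖ * ‖s - 1‖ * (x ^ (s.re - 2) + y ^ (s.re - 2)) := fun u hu => by
    rw [norm_mul, norm_mul, Complex.norm_cpow_eq_rpow_re_of_pos (hpos u hu)]
    simpa using mul_le_mul_of_nonneg_left
      (rpow_le_rpow_add_rpow_of_mem_uIcc (s.re - 2) hx hy hu)
      (mul_nonneg (norm_nonneg s) (norm_nonneg (s - 1)))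
  simpa [mul_comm _ ((y : ℂ) - x)] using
    norm_image_sub_sub_smul_deriv_le (hderiv s) hderiv' hbound

theorem Real.Gamma_integrand_mul_pow_eqOn {μ : ℝ} (j : ℕ) :
    EqOn (fun t : ℝ => rexp (-t) * t ^ (μ - 1) * t ^ j)
      (fun t => rexp (-t) * t ^ (μ + j - 1)) (Ioi 0) := fun t ht => by
  dsimp only
  rw [mul_assoc, ← rpow_natCast, ← rpow_add ht, sub_add_eq_add_sub]

theorem Real.integrableOn_Gamma_integrand_mul_pow {μ : ℝ} (hμ : 0 < μ) (j : ℕ) :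
    IntegrableOn (fun t : ℝ => rexp (-t) * t ^ (μ - 1) * t ^ j) (Ioi 0) :=
  (GammaIntegral_convergent (by positivity : 0 < μ + j)).congr_fun
    (Gamma_integrand_mul_pow_eqOn j).symm measurableSet_Ioi

theorem Real.integral_Gamma_integrand_mul_pow {μ : ℝ} (hμ : 0 < μ) (j : ℕ) :
    ∫ t in Ioi 0, rexp (-t) * t ^ (μ - 1) * t ^ j = Gamma (μ + j) := by
  rw [setIntegral_congr_fun measurableSet_Ioi (Gamma_integrand_mul_pow_eqOn j),
    Gamma_eq_integral (by positivity)]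

theorem Real.Gamma_integrand_mul_sub_sq_eq (μ n : ℝ) :
    (fun t : ℝ => rexp (-t) * t ^ (μ - 1) * (t - n) ^ 2) =
      fun t => rexp (-t) * t ^ (μ - 1) * t ^ 2 - 2 * n * (rexp (-t) * t ^ (μ - 1) * t ^ 1)
        + n ^ 2 * (rexp (-t) * t ^ (μ - 1) * t ^ 0) := by
  ext t; ring

theorem Real.integrableOn_Gamma_integrand_mul_sub_sq {μ : ℝ} (hμ : 0 < μ) (n : ℝ) :
    IntegrableOn (fun t : ℝ => rexp (-t) * t ^ (μ - 1) * (t - n) ^ 2) (Ioi 0) := by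
  rw [Gamma_integrand_mul_sub_sq_eq]
  exact ((integrableOn_Gamma_integrand_mul_pow hμ 2).sub
    ((integrableOn_Gamma_integrand_mul_pow hμ 1).const_mul _)).add
    ((integrableOn_Gamma_integrand_mul_pow hμ 0).const_mul _)

theorem Real.integral_Gamma_integrand_mul_sub_sq {μ : ℝ} (hμ : 0 < μ) (n : ℝ) :
    ∫ t in Ioi 0, rexp (-t) * t ^ (μ - 1) * (t - n) ^ 2 = Gamma μ * ((μ - n) ^ 2 + μ) := by
  have h := integrableOn_Gamma_integrand_mul_pow hμ
  rw [Gamma_integrand_mul_sub_sq_eq, integral_add ((h 2).fun_sub ((h 1).const_mul _))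
    ((h 0).const_mul _), integral_sub (h 2) ((h 1).const_mul _), integral_const_mul,
    integral_const_mul]
  simp only [integral_Gamma_integrand_mul_pow hμ, Nat.cast_ofNat, Nat.cast_one, Nat.cast_zero,
    add_zero]
  rw [show μ + 2 = μ + 1 + 1 by ring, Gamma_add_one (by positivity), Gamma_add_one hμ.ne']
  ring

theorem Complex.Gamma_add_sub_cpow_mul_Gamma_eq_integral (s : ℂ) {n : ℝ} (hn : 0 < n)
    (hs : 0 < s.re + n) :
    Gamma (s + n) - (n : ℂ) ^ s * Gamma n =
      ∫ t : ℝ in Ioi 0, ↑(rexp (-t)) * (t : ℂ) ^ ((n : ℂ) - 1)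
        * ((t : ℂ) ^ s - (n : ℂ) ^ s - s * (n : ℂ) ^ (s - 1) * ((t : ℂ) - n)) := by
  set G : ℂ → ℝ → ℂ := fun z t => ↑(rexp (-t)) * (t : ℂ) ^ (z - 1)
  have hG : ∀ z : ℂ, 0 < z.re → IntegrableOn (G z) (Ioi 0) ∧ ∫ t in Ioi 0, G z t = Gamma z :=
    fun z hz => ⟨GammaIntegral_convergent hz, (Gamma_eq_integral hz).symm⟩
  obtain ⟨hIs, hΓs⟩ := hG (s + n) (by simpa using hs)
  obtain ⟨hIn, hΓn⟩ := hG n (by simpa using hn)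
  obtain ⟨hIn₁, hΓn₁⟩ := hG (n + 1) (by simp; positivity)
  have hexpand : EqOn (fun t : ℝ => ↑(rexp (-t)) * (t : ℂ) ^ ((n : ℂ) - 1)
      * ((t : ℂ) ^ s - (n : ℂ) ^ s - s * (n : ℂ) ^ (s - 1) * ((t : ℂ) - n)))
      (fun t => G (s + n) t - (n : ℂ) ^ s * G n t
        - s * (n : ℂ) ^ (s - 1) * (G (n + 1) t - n * G n t)) (Ioi 0) := fun t ht => by
    have ht : (t : ℂ) ≠ 0 := Complex.ofReal_ne_zero.mpr (ne_of_gt ht)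
    simp only [G, add_sub_cancel_right, cpow_sub _ _ ht, cpow_add _ _ ht, cpow_one]
    field_simp
  rw [setIntegral_congr_fun measurableSet_Ioi hexpand,
    integral_sub (hIs.fun_sub (hIn.const_mul _)) ((hIn₁.fun_sub (hIn.const_mul _)).const_mul _),
    integral_sub hIs (hIn.const_mul _), integral_const_mul, integral_const_mul,
    integral_sub hIn₁ (hIn.const_mul _), integral_const_mul, hΓs, hΓn, hΓn₁,
    Gamma_add_one _ (by simpa using hn.ne')]
  ring

theorem Complex.norm_Gamma_add_sub_cpow_mul_Gamma_le (s : ℂ) {n : ℝ} (hn : 0 < n)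
    (hs : 0 < n + s.re - 2) :
    ‖Gamma (s + n) - (n : ℂ) ^ s * Gamma n‖
      ≤ ‖s‖ * ‖s - 1‖ * (n ^ (s.re - 2) * (Real.Gamma n * n)
        + Real.Gamma (n + s.re - 2) * ((s.re - 2) ^ 2 + (n + s.re - 2))) := by
  set σ := s.re
  have hg := Real.integrableOn_Gamma_integrand_mul_sub_sq hn n
  have hh := Real.integrableOn_Gamma_integrand_mul_sub_sq hs n
  have hpointwise : ∀ t ∈ Ioi (0 : ℝ), ‖↑(rexp (-t)) * (t : ℂ) ^ ((n : ℂ) - 1)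
      * ((t : ℂ) ^ s - (n : ℂ) ^ s - s * (n : ℂ) ^ (s - 1) * ((t : ℂ) - n))‖
      ≤ ‖s‖ * ‖s - 1‖ * (n ^ (σ - 2) * (rexp (-t) * t ^ (n - 1) * (t - n) ^ 2)
        + rexp (-t) * t ^ (n + σ - 2 - 1) * (t - n) ^ 2) := fun t (ht : 0 < t) => by
    have hexp : t ^ (n + σ - 2 - 1) = t ^ (n - 1) * t ^ (σ - 2) := by
      rw [← rpow_add ht]; ring_nf
    rw [norm_mul, norm_mul, Complex.norm_real, norm_of_nonneg (exp_pos _).le,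
      Complex.norm_cpow_eq_rpow_re_of_pos ht, hexp]
    calc rexp (-t) * t ^ ((n : ℂ) - 1).re * ‖(t : ℂ) ^ s - (n : ℂ) ^ s
          - s * (n : ℂ) ^ (s - 1) * ((t : ℂ) - n)‖
        ≤ rexp (-t) * t ^ (n - 1)
            * (‖s‖ * ‖s - 1‖ * (n ^ (σ - 2) + t ^ (σ - 2)) * (t - n) ^ 2) := by
          simpa using mul_le_mul_of_nonneg_left (norm_ofReal_cpow_sub_sub_mul_le s hn ht)
            (by positivity : 0 ≤ rexp (-t) * t ^ (n - 1))
      _ = _ := by ring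
  rw [Complex.Gamma_add_sub_cpow_mul_Gamma_eq_integral s hn (by linarith)]
  refine (norm_integral_le_of_norm_le ((hg.const_mul _).fun_add hh |>.const_mul _)
    ((ae_restrict_iff' measurableSet_Ioi).mpr (.of_forall hpointwise))).trans_eq ?_
  rw [integral_const_mul, integral_add (hg.const_mul _) hh, integral_const_mul,
    Real.integral_Gamma_integrand_mul_sub_sq hn, Real.integral_Gamma_integrand_mul_sub_sq hs]
  ring_nf

theorem Real.Gamma_add_nat_le {x : ℝ} (hx : 0 < x) (m : ℕ) :
    Gamma (x + m) ≤ Gamma x * (x + m) ^ m := by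
  induction m with
  | zero => simp
  | succ m ih =>
    have hxm : 0 < x + m := by positivity
    calc Gamma (x + (m + 1 : ℕ)) = (x + m) * Gamma (x + m) := by
          rw [Nat.cast_succ, ← add_assoc, Gamma_add_one hxm.ne']
      _ ≤ (x + m) * (Gamma x * (x + m) ^ m) := by gcongr
      _ ≤ (x + (m + 1 : ℕ)) * (Gamma x * (x + (m + 1 : ℕ)) ^ m) := by
          have := (Gamma_pos_of_pos hx).le
          gcongr <;> simp
      _ = Gamma x * (x + (m + 1 : ℕ)) ^ (m + 1) := by ring

theorem Real.Gamma_add_le_mul_rpow {x z : ℝ} {m : ℕ} (hx : 0 < x) (hz : 0 ≤ z) (hzm : z ≤ m) :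
    Gamma (x + z) ≤ Gamma x * (x + m) ^ z := by
  rcases hz.eq_or_lt with rfl | hz
  · simp
  rcases hzm.eq_or_lt with rfl | hzm
  · simpa using Gamma_add_nat_le hx m
  have hm : (0 : ℝ) < m := hz.trans hzm
  have hxm : 0 < x + m := by positivity
  set t := z / m
  have ht : 0 < t := by positivity
  have ht1 : t < 1 := (div_lt_one hm).mpr hzm
  have hconv : x + z = (1 - t) * x + t * (x + m) := by
    simp only [t]; field_simp; ring
  calc Gamma (x + z) ≤ Gamma x ^ (1 - t) * Gamma (x + m) ^ t := by
        rw [hconv]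
        exact Gamma_mul_add_mul_le_rpow_Gamma_mul_rpow_Gamma hx hxm (by linarith) ht (by ring)
    _ ≤ Gamma x ^ (1 - t) * (Gamma x * (x + m) ^ m) ^ t := by
        have := Gamma_pos_of_pos hx
        gcongr
        exact Gamma_add_nat_le hx m
    _ = Gamma x * (x + m) ^ z := by
        have := Gamma_pos_of_pos hx
        rw [mul_rpow (by positivity) (by positivity), ← rpow_natCast, ← rpow_mul hxm.le,
          ← mul_assoc, ← rpow_add this, sub_add_cancel, rpow_one,
          show (m : ℝ) * t = z by simp only [t]; field_simp]

theorem Real.Gamma_add_le_rpow_mul_Gamma_mul_rpow {x z : ℝ} {m : ℕ} (hx : 1 ≤ x) (hz : 0 ≤ z)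
    (hzm : z ≤ m) : Gamma (x + z) ≤ (1 + m) ^ z * (Gamma x * x ^ z) := by
  have hx₀ : 0 < x := by linarith
  calc Gamma (x + z) ≤ Gamma x * (x + m) ^ z := Gamma_add_le_mul_rpow hx₀ hz hzm
    _ ≤ Gamma x * ((1 + m) * x) ^ z := by
        have := Gamma_pos_of_pos hx₀
        gcongr
        nlinarith [(Nat.cast_nonneg m : (0 : ℝ) ≤ m)]
    _ = (1 + m) ^ z * (Gamma x * x ^ z) := by rw [mul_rpow (by positivity) hx₀.le]; ring

theorem Real.mul_Gamma_add_sub_two_mul_le {n σ : ℝ} (hn : 2 ≤ n) (hσ : 0 < σ) :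
    n * (Gamma (n + σ - 2) * ((σ - 2) ^ 2 + (n + σ - 2)))
      ≤ 2 * ((σ - 2) ^ 2 / σ + 1) * Gamma (n + σ) := by
  set μ := n + σ - 2
  have hμ : σ ≤ μ := by linarith
  have hΓ : Gamma (n + σ) = (μ + 1) * (μ * Gamma μ) := by
    rw [← Gamma_add_one (by linarith), ← Gamma_add_one (by linarith)]; congr 1; ring
  have hquad : (σ - 2) ^ 2 + μ ≤ ((σ - 2) ^ 2 / σ + 1) * μ := by
    have : (σ - 2) ^ 2 ≤ (σ - 2) ^ 2 / σ * μ := by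
      rw [div_mul_eq_mul_div, le_div_iff₀ hσ]; gcongr
    linarith
  have hμ₀ : 0 < μ := hσ.trans_le hμ
  have := Gamma_pos_of_pos hμ₀
  calc n * (Gamma μ * ((σ - 2) ^ 2 + μ))
        ≤ (2 * (μ + 1)) * (Gamma μ * (((σ - 2) ^ 2 / σ + 1) * μ)) := by
        gcongr
        linarith
    _ = 2 * ((σ - 2) ^ 2 / σ + 1) * Gamma (n + σ) := by rw [hΓ]; ring

theorem Complex.norm_Gamma_add_div_Gamma_sub_cpow_le (s : ℂ) {n B : ℝ} (hn : 2 ≤ n)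
    (hs : 0 < s.re) (hB : Real.Gamma (n + s.re) ≤ B * (Real.Gamma n * n ^ s.re)) :
    ‖Gamma (s + n) / Gamma n - (n : ℂ) ^ s‖
      ≤ ‖s‖ * ‖s - 1‖ * (2 * ((s.re - 2) ^ 2 / s.re + 1) * B + 1) * n⁻¹ * ‖(n : ℂ) ^ s‖ := by
  set σ := s.re
  set K := 2 * ((σ - 2) ^ 2 / σ + 1)
  have hn₀ : 0 < n := by linarith
  have hΓn := Real.Gamma_pos_of_pos hn₀
  have hmain : n ^ (σ - 2) * (Real.Gamma n * n) = n⁻¹ * (n ^ σ * Real.Gamma n) := by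
    rw [rpow_sub hn₀, rpow_two]; field_simp
  have hrest : Real.Gamma (n + σ - 2) * ((σ - 2) ^ 2 + (n + σ - 2))
      ≤ n⁻¹ * (K * B * (n ^ σ * Real.Gamma n)) := by
    rw [← div_eq_inv_mul, le_div_iff₀ hn₀, mul_comm]
    calc n * (Real.Gamma (n + σ - 2) * ((σ - 2) ^ 2 + (n + σ - 2)))
        ≤ K * Real.Gamma (n + σ) := Real.mul_Gamma_add_sub_two_mul_le hn hs
      _ ≤ K * (B * (Real.Gamma n * n ^ σ)) := by gcongr
      _ = K * B * (n ^ σ * Real.Gamma n) := by ring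
  have hdiff : Gamma (s + n) / Gamma n - (n : ℂ) ^ s
      = (Gamma (s + n) - (n : ℂ) ^ s * Gamma n) / (Real.Gamma n : ℂ) := by
    have hne : (Real.Gamma n : ℂ) ≠ 0 := Complex.ofReal_ne_zero.mpr hΓn.ne'
    rw [Complex.Gamma_ofReal, sub_div, mul_div_cancel_right₀ _ hne]
  rw [hdiff, norm_div, Complex.norm_real, norm_of_nonneg hΓn.le, div_le_iff₀ hΓn,
    Complex.norm_cpow_eq_rpow_re_of_pos hn₀]
  calc ‖Gamma (s + n) - (n : ℂ) ^ s * Gamma n‖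
      ≤ ‖s‖ * ‖s - 1‖
          * (n⁻¹ * (n ^ σ * Real.Gamma n) + n⁻¹ * (K * B * (n ^ σ * Real.Gamma n))) := by
        refine (norm_Gamma_add_sub_cpow_mul_Gamma_le s hn₀ (by linarith)).trans ?_
        rw [hmain]
        gcongr
    _ = ‖s‖ * ‖s - 1‖ * (K * B + 1) * n⁻¹ * n ^ σ * Real.Gamma n := by ring

theorem stmt10_general (a b : ℝ) (ha : 0 < a) :
    ∃ C > (0 : ℝ), ∀ k : ℕ, 3 ≤ k → ∀ s : ℂ, a ≤ s.re → s.re ≤ b →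
      ‖Complex.Gamma (s + k - 1) / Complex.Gamma ((k : ℂ) - 1) - ((k : ℂ) - 1) ^ s‖
        ≤ C * (1 + ‖s‖) ^ 2 * (k : ℝ)⁻¹ * ‖((k : ℂ) - 1) ^ s‖ := by
  set B : ℝ := (1 + ⌈b⌉₊) ^ b
  refine ⟨2 * (2 * ((b ^ 2 + 4) / a + 1) * B + 1), by positivity, fun k hk s hsa hsb => ?_⟩
  set n : ℝ := k - 1
  have hk : (3 : ℝ) ≤ k := by exact_mod_cast hk
  have hn : 2 ≤ n := by linarith
  have hσ : 0 < s.re := ha.trans_le hsa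
  have hB : Real.Gamma (n + s.re) ≤ B * (Real.Gamma n * n ^ s.re) :=
    (Real.Gamma_add_le_rpow_mul_Gamma_mul_rpow (by linarith) hσ.le
      (hsb.trans (Nat.le_ceil b))).trans
      (by gcongr; exact rpow_le_rpow_of_exponent_le (by simp) hsb)
  have hquad : (s.re - 2) ^ 2 / s.re ≤ (b ^ 2 + 4) / a :=
    div_le_div₀ (by positivity) (by nlinarith) ha hsa
  have hnorm : ‖s‖ * ‖s - 1‖ ≤ (1 + ‖s‖) ^ 2 := by
    have := norm_sub_le s 1
    rw [norm_one] at this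
    nlinarith [norm_nonneg s, norm_nonneg (s - 1)]
  have hinv : n⁻¹ ≤ 2 * (k : ℝ)⁻¹ := by
    rw [inv_le_comm₀ (by linarith) (by positivity), mul_inv, inv_inv]; linarith
  have hcast : ((k : ℂ) - 1) = (n : ℂ) := by push_cast [n]; ring
  rw [hcast, add_sub_assoc, hcast]
  calc _ ≤ _ := Complex.norm_Gamma_add_div_Gamma_sub_cpow_le s hn hσ hB
    _ ≤ (1 + ‖s‖) ^ 2 * (2 * ((b ^ 2 + 4) / a + 1) * B + 1) * (2 * (k : ℝ)⁻¹)
          * ‖(n : ℂ) ^ s‖ := by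
        gcongr
    _ = _ := by ring

/-- Stirling-type asymptotic (Luo–Sarnak (2.3)): uniformly for `a ≤ Re(s) ≤ b`,
`Γ(s + k - 1)/Γ(k - 1) = (k - 1)^s (1 + O_{a,b}((|s| + 1)² k^{-1}))`. -/
theorem stmt10 (a b : ℝ) (ha : 0 < a) (hab : a ≤ b) :
    ∃ C > (0 : ℝ), ∀ k : ℕ, 3 ≤ k → ∀ s : ℂ, a ≤ s.re → s.re ≤ b →
      ‖Complex.Gamma (s + k - 1) / Complex.Gamma ((k : ℂ) - 1) - ((k : ℂ) - 1) ^ s‖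
        ≤ C * (1 + ‖s‖) ^ 2 * (k : ℝ)⁻¹ * ‖((k : ℂ) - 1) ^ s‖ :=
  stmt10_general a b ha
end
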